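/- arXiv:1905.12500 — 8 statements merged into one kernel-verified Lean document; each statement's English description precedes it below -/
import Mathlib

section
/- In a many-to-one matching market where each firm f has quota q_f and strict responsive preferences and each worker has strict preferences, every integer solution of the linear system SCP (machine capacity, worker capacity, nonnegativity, zero on unacceptable pairs, and the stability inequality sum_{j ≻_f w} x_{f,j} + q_f·sum_{i ≻_w f} x_{i,w} + q_f·x_{f,w} ≥ q_f for all acceptable pairs (f,w)) is the incidence vector of a stable matching, and conversely every stable matching's incidence vector satisfies SCP. -/
open Finset
open scoped Classical

/-- A many-to-one matching market: firms `F`, workers `W`, quotas `q`,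
strict preference relations of firms over individual workers and of workers
over firms, and acceptability predicates. -/
structure Market (F W : Type*) where
  q : F → ℕ
  qpos : ∀ f, 1 ≤ q f
  prefF : F → W → W → Prop
  prefW : W → F → F → Prop
  accF : F → W → Prop
  accW : W → F → Prop
  prefF_trans : ∀ f, Transitive (prefF f)
  prefF_irrefl : ∀ f w, ¬ prefF f w w
  prefF_total : ∀ f j w, j ≠ w → prefF f j w ∨ prefF f w j
  prefW_trans : ∀ w, Transitive (prefW w)
  prefW_irrefl : ∀ w f, ¬ prefW w f f
  prefW_total : ∀ w i f, i ≠ f → prefW w i f ∨ prefW w f i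

namespace Market

variable {F W : Type*} [Fintype F] [Fintype W] (M : Market F W)

def acceptable (f : F) (w : W) : Prop := M.accF f w ∧ M.accW w f

def weakF (f : F) (j w : W) : Prop := M.prefF f j w ∨ j = w

def weakW (w : W) (i f : F) : Prop := M.prefW w i f ∨ i = f

noncomputable def rowSumAbove (x : F → W → ℝ) (f : F) (w : W) : ℝ :=
  ∑ j ∈ univ.filter (fun j => M.weakF f j w), x f j

noncomputable def rowSumStrict (x : F → W → ℝ) (f : F) (w : W) : ℝ :=
  ∑ j ∈ univ.filter (fun j => M.prefF f j w), x f j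

noncomputable def colSumAbove (x : F → W → ℝ) (w : W) (f : F) : ℝ :=
  ∑ i ∈ univ.filter (fun i => M.weakW w i f), x i w

noncomputable def colSumStrict (x : F → W → ℝ) (w : W) (f : F) : ℝ :=
  ∑ i ∈ univ.filter (fun i => M.prefW w i f), x i w

/-- The SCP linear system: nonnegativity, firm capacity, worker capacity,
zero on unacceptable pairs, and the stability inequality on acceptable pairs. -/
def SCP (x : F → W → ℝ) : Prop :=
  (∀ f w, 0 ≤ x f w) ∧
  (∀ f, ∑ j, x f j ≤ (M.q f : ℝ)) ∧
  (∀ w, ∑ i, x i w ≤ 1) ∧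
  (∀ f w, ¬ M.acceptable f w → x f w = 0) ∧
  (∀ f w, M.acceptable f w →
    (M.q f : ℝ) ≤
      M.rowSumStrict x f w + (M.q f : ℝ) * M.colSumStrict x w f + (M.q f : ℝ) * x f w)

/-- The strong stability condition at a pair `(f, w)`. -/
def StrongCondAt (x : F → W → ℝ) (f : F) (w : W) : Prop :=
  ((M.q f : ℝ) - M.rowSumAbove x f w) * (1 - M.colSumAbove x w f) = 0

/-- A strongly stable fractional matching. -/
def StronglyStable (x : F → W → ℝ) : Prop :=
  M.SCP x ∧ ∀ f w, M.acceptable f w → M.StrongCondAt x f w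

def isMatching (μ : F → Finset W) : Prop :=
  (∀ f, (μ f).card ≤ M.q f) ∧ ∀ w f f', w ∈ μ f → w ∈ μ f' → f = f'

def indivRational (μ : F → Finset W) : Prop := ∀ f w, w ∈ μ f → M.acceptable f w

def blocks (μ : F → Finset W) (f : F) (w : W) : Prop :=
  w ∉ μ f ∧ M.acceptable f w ∧ (∀ f', w ∈ μ f' → M.prefW w f f') ∧
    ((μ f).card < M.q f ∨ ∃ w' ∈ μ f, M.prefF f w w')

def isStable (μ : F → Finset W) : Prop :=
  M.isMatching μ ∧ M.indivRational μ ∧ ∀ f w, ¬ M.blocks μ f w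

noncomputable def incidence (_m : Market F W) (μ : F → Finset W) : F → W → ℝ :=
  fun f w => if w ∈ μ f then 1 else 0

def firmWeakDom (x y : F → W → ℝ) (f : F) : Prop :=
  ∀ w, M.rowSumAbove y f w ≤ M.rowSumAbove x f w

/-- All firms weakly prefer `x` to `y`, at least one strictly. -/
def firmsPrefer (x y : F → W → ℝ) : Prop :=
  (∀ f, M.firmWeakDom x y f) ∧ ∃ f w, M.rowSumAbove y f w < M.rowSumAbove x f w

end Market

/-- Baïou–Balinski: the integer solutions of SCP are exactly the incidence
vectors of stable matchings. -/
theorem integer_SCP_iff_stable {F W : Type*} [Fintype F] [Fintype W] (M : Market F W) :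
    (∀ x : F → W → ℝ, M.SCP x → (∀ f w, x f w = 0 ∨ x f w = 1) →
      ∃ μ : F → Finset W, M.isStable μ ∧ x = M.incidence μ) ∧
    (∀ μ : F → Finset W, M.isStable μ → M.SCP (M.incidence μ)) := by
  constructor
  · -- forward direction
    intro x hx hint
    obtain ⟨hnn, hcap, hwcap, hzero, hstab⟩ := hx
    set μ : F → Finset W := fun f => univ.filter (fun w => x f w = 1) with hμ
    have hmem : ∀ f w, w ∈ μ f ↔ x f w = 1 := by
      intro f w; simp [hμ]
    have hxinc : x = M.incidence μ := by
      funext f w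
      simp only [Market.incidence]
      rcases hint f w with h | h
      · rw [if_neg, h]; rw [hmem, h]; norm_num
      · rw [if_pos, h]; rw [hmem, h]
    have hx0 : ∀ f w, w ∉ μ f → x f w = 0 := by
      intro f w h
      rcases hint f w with h0 | h1
      · exact h0
      · exact absurd ((hmem f w).mpr h1) h
    have hsum : ∀ f, ∑ j, x f j = ((μ f).card : ℝ) := by
      intro f
      rw [hxinc]
      simp only [Market.incidence]
      rw [Finset.sum_boole]
      congr 1
      simp [Finset.filter_univ_mem]
    refine ⟨μ, ⟨⟨?_, ?_⟩, ?_, ?_⟩, hxinc⟩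
    · -- firm capacity
      intro f
      have := hcap f
      rw [hsum f] at this
      exact_mod_cast this
    · -- matching uniqueness
      intro w f f' hf hf'
      by_contra hne
      have h2 : (2 : ℝ) ≤ ∑ i, x i w := by
        have hsub : ({f, f'} : Finset F) ⊆ univ := subset_univ _
        have : ∑ i ∈ ({f, f'} : Finset F), x i w ≤ ∑ i, x i w :=
          Finset.sum_le_sum_of_subset_of_nonneg hsub (fun i _ _ => hnn i w)
        rw [Finset.sum_pair hne, (hmem f w).mp hf, (hmem f' w).mp hf'] at this
        linarith
      linarith [hwcap w]
    · -- individual rationality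
      intro f w hw
      by_contra hacc
      have := hzero f w hacc
      rw [(hmem f w).mp hw] at this
      norm_num at this
    · -- no blocking pair
      intro f w hblock
      obtain ⟨hnmem, hacc, hpref, hlast⟩ := hblock
      have hxfw : x f w = 0 := hx0 f w hnmem
      have hcol : M.colSumStrict x w f = 0 := by
        apply Finset.sum_eq_zero
        intro i hi
        simp only [mem_filter, mem_univ, true_and] at hi
        by_contra hne
        have hi1 : x i w = 1 := by rcases hint i w with h | h; exact absurd h hne; exact h
        have hmem' : w ∈ μ i := (hmem i w).mpr hi1
        have : M.prefW w f i := hpref i hmem'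
        exact M.prefW_irrefl w i (M.prefW_trans w hi this)
      have hrow_le : M.rowSumStrict x f w ≤ ∑ j, x f j :=
        Finset.sum_le_sum_of_subset_of_nonneg (subset_univ _) (fun j _ _ => hnn f j)
      have hstab' := hstab f w hacc
      rw [hcol, hxfw] at hstab'
      simp only [mul_zero, add_zero] at hstab'
      have hrow_eq : M.rowSumStrict x f w = (M.q f : ℝ) := le_antisymm (hrow_le.trans (hcap f)) hstab'
      have hsumq : ∑ j, x f j = (M.q f : ℝ) := le_antisymm (hcap f) (hrow_eq ▸ hrow_le)
      -- every j not strictly preferred to w has x f j = 0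
      have hcompl : ∀ j, ¬ M.prefF f j w → x f j = 0 := by
        have hsplit := Finset.sum_filter_add_sum_filter_not univ (fun j => M.prefF f j w) (x f ·)
        have hzero' : ∑ j ∈ univ.filter (fun j => ¬ M.prefF f j w), x f j = 0 := by
          have : M.rowSumStrict x f w + ∑ j ∈ univ.filter (fun j => ¬ M.prefF f j w), x f j
              = ∑ j, x f j := hsplit
          rw [hrow_eq, hsumq] at this
          linarith
        intro j hj
        have := (Finset.sum_eq_zero_iff_of_nonneg (fun i _ => hnn f i)).mp hzero' j
          (by simp [hj])
        exact this
      rcases hlast with hlt | ⟨w', hw', hpw⟩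
      · have : ((μ f).card : ℝ) = (M.q f : ℝ) := by rw [← hsum f, hsumq]
        have : (μ f).card = M.q f := by exact_mod_cast this
        omega
      · have h1 : x f w' = 1 := (hmem f w').mp hw'
        have hnp : ¬ M.prefF f w' w := fun h =>
          M.prefF_irrefl f w (M.prefF_trans f hpw h)
        rw [hcompl w' hnp] at h1
        norm_num at h1
  · -- reverse direction
    intro μ hst
    obtain ⟨⟨hqcap, huniq⟩, hir, hnb⟩ := hst
    have hnn : ∀ f w, 0 ≤ M.incidence μ f w := by
      intro f w; simp only [Market.incidence]; split <;> norm_num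
    have hsum : ∀ f, ∑ j, M.incidence μ f j = ((μ f).card : ℝ) := by
      intro f
      simp only [Market.incidence]
      rw [Finset.sum_boole]
      congr 1
      simp [Finset.filter_univ_mem]
    refine ⟨hnn, ?_, ?_, ?_, ?_⟩
    · intro f
      rw [hsum f]
      exact_mod_cast hqcap f
    · intro w
      simp only [Market.incidence]
      rw [Finset.sum_boole]
      have : (univ.filter (fun i => w ∈ μ i)).card ≤ 1 := by
        apply Finset.card_le_one.mpr
        intro a ha b hb
        simp only [mem_filter, mem_univ, true_and] at ha hb
        exact huniq w a b ha hb
      exact_mod_cast this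
    · intro f w hacc
      simp only [Market.incidence]
      rw [if_neg (fun h => hacc (hir f w h))]
    · intro f w hacc
      by_cases hw : w ∈ μ f
      · have h1 : M.incidence μ f w = 1 := by simp [Market.incidence, hw]
        have h2 : 0 ≤ M.rowSumStrict (M.incidence μ) f w :=
          Finset.sum_nonneg (fun j _ => hnn f j)
        have h3 : 0 ≤ M.colSumStrict (M.incidence μ) w f :=
          Finset.sum_nonneg (fun i _ => hnn i w)
        have hq : (0:ℝ) ≤ (M.q f : ℝ) := Nat.cast_nonneg _
        nlinarith
      · have hxfw : M.incidence μ f w = 0 := by simp [Market.incidence, hw]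
        have hnblock := hnb f w
        simp only [Market.blocks, not_and] at hnblock
        have hnblock' := hnblock hw hacc
        by_cases hwpref : ∀ f', w ∈ μ f' → M.prefW w f f'
        · -- then last condition fails: μ f full and all of μ f preferred to w
          have hlast := hnblock' hwpref
          push_neg at hlast
          obtain ⟨hfull, hall⟩ := hlast
          have hcard : (μ f).card = M.q f := le_antisymm (hqcap f) hfull
          -- μ f ⊆ strict filter
          have hsub : μ f ⊆ univ.filter (fun j => M.prefF f j w) := by
            intro j hj
            simp only [mem_filter, mem_univ, true_and]
            have hne : j ≠ w := fun h => hw (h ▸ hj)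
            rcases M.prefF_total f j w hne with h | h
            · exact h
            · exact absurd h (hall j hj)
          have hrow : ((μ f).card : ℝ) ≤ M.rowSumStrict (M.incidence μ) f w := by
            have h1 : ∑ j ∈ μ f, M.incidence μ f j = ((μ f).card : ℝ) := by
              have he : ∀ j ∈ μ f, M.incidence μ f j = 1 := fun j hj => by
                simp [Market.incidence, hj]
              rw [Finset.sum_congr rfl he, Finset.sum_const, nsmul_eq_mul, mul_one]
            calc ((μ f).card : ℝ) = ∑ j ∈ μ f, M.incidence μ f j := h1.symm
              _ ≤ M.rowSumStrict (M.incidence μ) f w :=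
                Finset.sum_le_sum_of_subset_of_nonneg hsub (fun j _ _ => hnn f j)
          have h3 : 0 ≤ M.colSumStrict (M.incidence μ) w f :=
            Finset.sum_nonneg (fun i _ => hnn i w)
          have hq : (0:ℝ) ≤ (M.q f : ℝ) := Nat.cast_nonneg _
          rw [hcard] at hrow
          nlinarith
        · -- some f' matches w and is weakly preferred by w over f
          push_neg at hwpref
          obtain ⟨f', hf', hnp⟩ := hwpref
          have hne : f' ≠ f := fun h => hw (h ▸ hf')
          have hpf' : M.prefW w f' f := by
            rcases M.prefW_total w f' f hne with h | h
            · exact h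
            · exact absurd h hnp
          have hcol : (1:ℝ) ≤ M.colSumStrict (M.incidence μ) w f := by
            have hf'mem : f' ∈ univ.filter (fun i => M.prefW w i f) := by
              simp [hpf']
            unfold Market.colSumStrict
            calc (1:ℝ) = M.incidence μ f' w := by simp [Market.incidence, hf']
              _ ≤ _ := Finset.single_le_sum (fun i _ => hnn i w) hf'mem
          have h2 : 0 ≤ M.rowSumStrict (M.incidence μ) f w :=
            Finset.sum_nonneg (fun j _ => hnn f j)
          have hq : (0:ℝ) ≤ (M.q f : ℝ) := Nat.cast_nonneg _
          have h4 : 0 ≤ M.incidence μ f w := hnn f w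
          nlinarith
end

section
/- The incidence vector of any stable matching satisfies the strong stability condition: for every acceptable pair (f,w), (q_f − Σ_{j ⪰_f w} x_{f,j}) · (1 − Σ_{i ⪰_w f} x_{i,w}) = 0. -/
open Finset
open scoped Classical

/-- The incidence vector of a stable matching satisfies the strong stability
condition at every acceptable pair. -/
theorem stable_satisfies_strong_condition {F W : Type*} [Fintype F] [Fintype W]
    (M : Market F W) (μ : F → Finset W) (hμ : M.isStable μ)
    (f : F) (w : W) (hacc : M.acceptable f w) :
    M.StrongCondAt (M.incidence μ) f w := by
  classical
  obtain ⟨⟨hcard, huniq⟩, hir, hnb⟩ := hμ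
  unfold Market.StrongCondAt
  by_contra h
  have h1 : (M.q f : ℝ) - M.rowSumAbove (M.incidence μ) f w ≠ 0 := by
    intro hh; exact h (by rw [hh, zero_mul])
  have h2 : (1 : ℝ) - M.colSumAbove (M.incidence μ) w f ≠ 0 := by
    intro hh; exact h (by rw [hh, mul_zero])
  set A := (univ.filter (fun j => M.weakF f j w)).filter (fun j => j ∈ μ f) with hA
  set B := (univ.filter (fun i => M.weakW w i f)).filter (fun i => w ∈ μ i) with hB
  have hrow : M.rowSumAbove (M.incidence μ) f w = (A.card : ℝ) := by
    unfold Market.rowSumAbove Market.incidence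
    rw [Finset.sum_boole]
  have hcol : M.colSumAbove (M.incidence μ) w f = (B.card : ℝ) := by
    unfold Market.colSumAbove Market.incidence
    rw [Finset.sum_boole]
  have hAsub : A ⊆ μ f := fun j hj => (Finset.mem_filter.mp hj).2
  have hAle : A.card ≤ M.q f := le_trans (Finset.card_le_card hAsub) (hcard f)
  have hAlt : A.card < M.q f := by
    rcases lt_or_eq_of_le hAle with h' | h'
    · exact h'
    · exact absurd (by rw [hrow, h', sub_self]) h1
  have hle : B.card ≤ 1 := by
    apply Finset.card_le_one.mpr
    intro a ha b hb
    exact huniq w a b (Finset.mem_filter.mp ha).2 (Finset.mem_filter.mp hb).2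
  have hBzero : B = ∅ := by
    rcases Nat.lt_or_ge B.card 1 with h' | h'
    · exact Finset.card_eq_zero.mp (Nat.lt_one_iff.mp h')
    · have hone : B.card = 1 := le_antisymm hle h'
      have : M.colSumAbove (M.incidence μ) w f = 1 := by rw [hcol, hone, Nat.cast_one]
      exact absurd (by rw [this, sub_self]) h2
  have hwnot : w ∉ μ f := by
    intro hw
    have hfB : f ∈ B := by
      rw [hB, Finset.mem_filter, Finset.mem_filter]
      exact ⟨⟨Finset.mem_univ f, Or.inr rfl⟩, hw⟩
    rw [hBzero] at hfB
    exact absurd hfB (Finset.notMem_empty f)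
  have hpref : ∀ f', w ∈ μ f' → M.prefW w f f' := by
    intro f' hf'
    have hnB : f' ∉ B := by rw [hBzero]; exact Finset.notMem_empty f'
    have hnw : ¬ M.weakW w f' f := by
      intro hw
      have hmem : f' ∈ B := by
        rw [hB, Finset.mem_filter, Finset.mem_filter]
        exact ⟨⟨Finset.mem_univ f', hw⟩, hf'⟩
      exact hnB hmem
    have hne : f ≠ f' := fun he => hnw (Or.inr he.symm)
    rcases M.prefW_total w f f' hne with h' | h'
    · exact h'
    · exact absurd (Or.inl h') hnw
  have hlast : (μ f).card < M.q f ∨ ∃ w' ∈ μ f, M.prefF f w w' := by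
    by_cases hc : (μ f).card < M.q f
    · exact Or.inl hc
    · right
      have hcq : (μ f).card = M.q f := le_antisymm (hcard f) (not_lt.mp hc)
      have hAlt' : A.card < (μ f).card := hcq ▸ hAlt
      have hss : A ⊂ μ f := hAsub.ssubset_of_ne (fun he => absurd hAlt' (by rw [he]; exact lt_irrefl _))
      obtain ⟨w', hw'mem, hw'notA⟩ := Finset.exists_of_ssubset hss
      have hnweak : ¬ M.weakF f w' w := by
        intro hwk
        have hmem : w' ∈ A := by
          rw [hA, Finset.mem_filter, Finset.mem_filter]
          exact ⟨⟨Finset.mem_univ w', hwk⟩, hw'mem⟩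
        exact hw'notA hmem
      have hne : w ≠ w' := fun he => hnweak (Or.inr he.symm)
      rcases M.prefF_total f w w' hne with h' | h'
      · exact ⟨w', hw'mem, h'⟩
      · exact absurd (Or.inl h') hnweak
  exact hnb f w ⟨hwnot, hacc, hpref, hlast⟩
end

section
/- Let x̄ be a strongly stable fractional matching. Define μ_x̄(f) to be the set of the (at most) q_f most preferred workers w of firm f with x̄_{f,w} > 0. Then μ_x̄ is a well-defined matching: no worker belongs to μ_x̄(f) for two distinct firms f. -/
open Finset
open scoped Classical

namespace Market

variable {F W : Type*} [Fintype F] [Fintype W] (M : Market F W)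

noncomputable def supportRow (_m : Market F W) (x : F → W → ℝ) (f : F) : Finset W :=
  univ.filter (fun w => 0 < x f w)

/-- `μ_x(f)`: the `q f` most preferred workers of `f` among those with `x f w > 0`. -/
noncomputable def muX (x : F → W → ℝ) (f : F) : Finset W :=
  (M.supportRow x f).filter
    (fun w => ((M.supportRow x f).filter (fun w' => M.prefF f w' w)).card < M.q f)

end Market

/-!
Proof idea: if `w ∈ μ_x(f)` then `x f w > 0`, and fewer than `q f` workers that `f` prefers to `w`
carry positive mass, each at most `1`. So if moreover `x f w < 1`, the firm `f` is below its quota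
up to `w`, and strong stability forces `w` to be saturated by firms it weakly prefers to `f`:
every firm worse than `f` for `w` has `x _ w = 0`. Two distinct firms with `w ∈ μ_x(f) ∩ μ_x(f')`
share the unit capacity of `w`, so both masses are `< 1`, and whichever of them `w` ranks lower
must then carry zero mass, a contradiction.
-/

namespace Market

variable {F W : Type*} (M : Market F W) {x : F → W → ℝ} {f g : F} {w : W}

lemma prefW_asymm {i j : F} (h : M.prefW w i j) : ¬ M.prefW w j i :=
  fun h' => M.prefW_irrefl w i (M.prefW_trans w h h')

variable [Fintype W]

lemma mem_supportRow : w ∈ M.supportRow x f ↔ 0 < x f w := by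
  simp [supportRow]

lemma pos_of_mem_muX (h : w ∈ M.muX x f) : 0 < x f w :=
  M.mem_supportRow.mp (mem_filter.mp h).1

lemma rowSumAbove_eq_add_rowSumStrict :
    M.rowSumAbove x f w = x f w + M.rowSumStrict x f w := by
  have hset : univ.filter (fun j => M.weakF f j w)
      = insert w (univ.filter (fun j => M.prefF f j w)) := by
    ext j
    simp [weakF, or_comm]
  rw [rowSumAbove, hset, sum_insert (by simp [M.prefF_irrefl f w]), rowSumStrict]

lemma rowSumStrict_le_card (hle : ∀ j, x f j ≤ 1) :
    M.rowSumStrict x f w ≤ ((M.supportRow x f).filter (fun j => M.prefF f j w)).card := by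
  set S := univ.filter (fun j => M.prefF f j w)
  have hpos : S.filter (fun j => 0 < x f j) = (M.supportRow x f).filter (M.prefF f · w) := by
    ext j
    simp only [S, mem_filter, mem_univ, true_and, mem_supportRow]
    tauto
  calc M.rowSumStrict x f w
      = ∑ j ∈ S.filter (fun j => 0 < x f j), x f j
        + ∑ j ∈ S.filter (fun j => ¬ 0 < x f j), x f j :=
        (sum_filter_add_sum_filter_not S _ _).symm
    _ ≤ ∑ _j ∈ S.filter (fun j => 0 < x f j), (1 : ℝ) + 0 := by
        gcongr with j
        · exact hle j
        · exact sum_nonpos fun i hi => not_lt.mp (mem_filter.mp hi).2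
    _ = _ := by rw [hpos]; simp

lemma rowSumAbove_lt_of_mem_muX (hle : ∀ j, x f j ≤ 1) (h : w ∈ M.muX x f)
    (hlt : x f w < 1) : M.rowSumAbove x f w < M.q f := by
  have hcard : (((M.supportRow x f).filter (M.prefF f · w)).card : ℝ) + 1 ≤ M.q f := by
    exact_mod_cast (mem_filter.mp h).2
  rw [rowSumAbove_eq_add_rowSumStrict]
  linarith [M.rowSumStrict_le_card (w := w) hle]

variable [Fintype F]

namespace SCP

variable {M}

lemma le_one (hx : M.SCP x) (f : F) (w : W) : x f w ≤ 1 :=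
  (single_le_sum (fun i _ => hx.1 i w) (mem_univ f)).trans (hx.2.2.1 w)

lemma acceptable_of_pos (hx : M.SCP x) (h : 0 < x f w) : M.acceptable f w := by
  by_contra hna
  exact h.ne' (hx.2.2.2.1 f w hna)

lemma add_le_one (hx : M.SCP x) (hne : f ≠ g) : x f w + x g w ≤ 1 := by
  rw [← sum_pair (f := fun i => x i w) hne]
  exact (sum_le_sum_of_subset_of_nonneg (subset_univ _) fun i _ _ => hx.1 i w).trans
    (hx.2.2.1 w)

lemma eq_zero_of_colSumAbove_eq_one (hx : M.SCP x) (h1 : M.colSumAbove x w f = 1)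
    (hg : M.prefW w f g) : x g w = 0 := by
  have hnot : ¬ M.weakW w g f := by
    rintro (hgf | rfl)
    exacts [M.prefW_asymm hg hgf, M.prefW_irrefl w g hg]
  have hsplit := sum_filter_add_sum_filter_not univ (M.weakW w · f) (fun i => x i w)
  have hrest : x g w ≤ ∑ i ∈ univ.filter (fun i => ¬ M.weakW w i f), x i w :=
    single_le_sum (fun i _ => hx.1 i w) (by simp [hnot])
  rw [colSumAbove] at h1
  linarith [hx.1 g w, hx.2.2.1 w]

end SCP

namespace StronglyStable

variable {M}

lemma colSumAbove_eq_one_of_mem_muX (hx : M.StronglyStable x) (h : w ∈ M.muX x f)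
    (hlt : x f w < 1) : M.colSumAbove x w f = 1 := by
  have hacc := hx.1.acceptable_of_pos (M.pos_of_mem_muX h)
  have hrow := M.rowSumAbove_lt_of_mem_muX (hx.1.le_one f) h hlt
  rcases mul_eq_zero.mp (hx.2 f w hacc) with hq | hc <;> linarith

lemma eq_zero_of_mem_muX (hx : M.StronglyStable x) (h : w ∈ M.muX x f) (hlt : x f w < 1)
    (hg : M.prefW w f g) : x g w = 0 :=
  hx.1.eq_zero_of_colSumAbove_eq_one (hx.colSumAbove_eq_one_of_mem_muX h hlt) hg

end StronglyStable

end Market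

/-- For a strongly stable fractional matching `x`, the assignment `μ_x` is
well defined: no worker is assigned to two distinct firms. -/
theorem muX_well_defined {F W : Type*} [Fintype F] [Fintype W]
    (M : Market F W) (x : F → W → ℝ) (hx : M.StronglyStable x)
    (w : W) (f f' : F) (h : w ∈ M.muX x f) (h' : w ∈ M.muX x f') :
    f = f' := by
  by_contra hne
  have hpos := M.pos_of_mem_muX h
  have hpos' := M.pos_of_mem_muX h'
  have hpair := hx.1.add_le_one (w := w) hne
  rcases M.prefW_total w f f' hne with hp | hp
  · linarith [hx.eq_zero_of_mem_muX h (by linarith) hp]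
  · linarith [hx.eq_zero_of_mem_muX h' (by linarith) hp]
end

section
/- Let x̄ be a strongly stable fractional matching in a many-to-one matching market, and let μ_x̄ assign to each firm f its q_f most preferred workers among those w with x̄_{f,w} > 0. Then μ_x̄ is a stable matching. -/
open Finset
open scoped Classical

/-! ### Auxiliary machinery for the proof -/

namespace MuXStableAux

open Market

variable {F W : Type*} [Fintype F] [Fintype W]

/-- Rank of a worker in the support of a firm's row. -/
noncomputable def rk (M : Market F W) (x : F → W → ℝ) (f : F) (v : W) : ℕ :=
  ((M.supportRow x f).filter (fun j => M.prefF f j v)).card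

variable {M : Market F W} {x : F → W → ℝ}

lemma mem_supportRow {f : F} {v : W} : v ∈ M.supportRow x f ↔ 0 < x f v := by
  simp [Market.supportRow]

lemma mem_muX_iff {f : F} {v : W} :
    v ∈ M.muX x f ↔ 0 < x f v ∧ rk M x f v < M.q f := by
  simp [Market.muX, rk, mem_supportRow, Finset.mem_filter]

lemma pos_of_mem_muX {f : F} {v : W} (h : v ∈ M.muX x f) : 0 < x f v :=
  (mem_muX_iff.1 h).1

lemma xnonneg (hx : M.StronglyStable x) (f : F) (w : W) : 0 ≤ x f w := hx.1.1 f w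

lemma colsum_le_one (hx : M.StronglyStable x) (w : W) : ∑ i, x i w ≤ 1 :=
  hx.1.2.2.1 w

lemma rowsum_le (hx : M.StronglyStable x) (f : F) : ∑ j, x f j ≤ (M.q f : ℝ) :=
  hx.1.2.1 f

lemma x_le_one (hx : M.StronglyStable x) (f : F) (w : W) : x f w ≤ 1 := by
  have h1 : x f w ≤ ∑ i, x i w :=
    Finset.single_le_sum (fun i _ => hx.1.1 i w) (Finset.mem_univ f)
  exact h1.trans (colsum_le_one hx w)

lemma acc_of_pos (hx : M.StronglyStable x) {f : F} {w : W} (h : 0 < x f w) :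
    M.acceptable f w := by
  by_contra hc
  rw [hx.1.2.2.2.1 f w hc] at h
  exact lt_irrefl 0 h

lemma x_zero_of_not_pos (hx : M.StronglyStable x) {f : F} {w : W} (h : ¬ 0 < x f w) :
    x f w = 0 :=
  le_antisymm (not_lt.1 h) (hx.1.1 f w)

lemma two_le_colsum (hx : M.StronglyStable x) {f f' : F} (hne : f ≠ f') (w : W) :
    x f w + x f' w ≤ 1 := by
  have h1 : ∑ i ∈ ({f, f'} : Finset F), x i w ≤ ∑ i, x i w :=
    Finset.sum_le_sum_of_subset_of_nonneg (Finset.subset_univ _)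
      (fun i _ _ => hx.1.1 i w)
  rw [Finset.sum_pair hne] at h1
  exact h1.trans (colsum_le_one hx w)

lemma colAbove_le_colsum (hx : M.StronglyStable x) {w : W} {f : F} :
    M.colSumAbove x w f ≤ ∑ i, x i w :=
  Finset.sum_le_sum_of_subset_of_nonneg (Finset.subset_univ _)
    (fun i _ _ => hx.1.1 i w)

lemma colAbove_le_one (hx : M.StronglyStable x) (w : W) (f : F) :
    M.colSumAbove x w f ≤ 1 :=
  (colAbove_le_colsum hx).trans (colsum_le_one hx w)

/-- Insert trick, column version. -/
lemma colAbove_add_le (hx : M.StronglyStable x) {w : W} {f k : F}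
    (hk : ¬ M.weakW w k f) : M.colSumAbove x w f + x k w ≤ 1 := by
  have hkmem : k ∉ Finset.univ.filter (fun i => M.weakW w i f) := by
    simp [hk]
  have h1 : ∑ i ∈ insert k (Finset.univ.filter (fun i => M.weakW w i f)), x i w
      ≤ ∑ i, x i w :=
    Finset.sum_le_sum_of_subset_of_nonneg (Finset.subset_univ _)
      (fun i _ _ => hx.1.1 i w)
  rw [Finset.sum_insert hkmem] at h1
  have h2 := colsum_le_one hx w
  unfold Market.colSumAbove
  linarith

/-- Insert trick, row version. -/
lemma rowAbove_add_le (hx : M.StronglyStable x) {f : F} {j u : W}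
    (hu : ¬ M.weakF f u j) : M.rowSumAbove x f j + x f u ≤ (M.q f : ℝ) := by
  have humem : u ∉ Finset.univ.filter (fun j' => M.weakF f j' j) := by
    simp [hu]
  have h1 : ∑ j' ∈ insert u (Finset.univ.filter (fun j' => M.weakF f j' j)), x f j'
      ≤ ∑ j', x f j' :=
    Finset.sum_le_sum_of_subset_of_nonneg (Finset.subset_univ _)
      (fun j' _ _ => hx.1.1 f j')
  rw [Finset.sum_insert humem] at h1
  have h2 := rowsum_le hx f
  unfold Market.rowSumAbove
  linarith

lemma dichotomy (hx : M.StronglyStable x) {f : F} {w : W} (hacc : M.acceptable f w) :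
    M.rowSumAbove x f w = (M.q f : ℝ) ∨ M.colSumAbove x w f = 1 := by
  have h := hx.2 f w hacc
  unfold Market.StrongCondAt at h
  rcases mul_eq_zero.1 h with h1 | h1
  · left; linarith [sub_eq_zero.1 h1]
  · right; linarith [sub_eq_zero.1 h1]

/-- Lemma A: if `f` has positive weight on `u` and on a strictly better `j`,
then `j`'s column above `f` is full. -/
lemma colAbove_one_of_better (hx : M.StronglyStable x) {f : F} {u j : W}
    (hu : 0 < x f u) (hj : 0 < x f j) (hp : M.prefF f j u) :
    M.colSumAbove x j f = 1 := by
  rcases dichotomy hx (acc_of_pos hx hj) with h | h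
  · exfalso
    have hnw : ¬ M.weakF f u j := by
      rintro (h' | h')
      · exact M.prefF_irrefl f u (M.prefF_trans f h' hp)
      · exact M.prefF_irrefl f j (h' ▸ hp)
    have := rowAbove_add_le hx hnw
    rw [h] at this
    linarith
  · exact h

lemma colsum_one_of_colAbove (hx : M.StronglyStable x) {w : W} {f : F}
    (h : M.colSumAbove x w f = 1) : ∑ i, x i w = 1 :=
  le_antisymm (colsum_le_one hx w) (h ▸ colAbove_le_colsum hx)

lemma weak_of_pos (hx : M.StronglyStable x) {w : W} {f k : F}
    (h : M.colSumAbove x w f = 1) (hk : 0 < x k w) : M.weakW w k f := by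
  by_contra hc
  have := colAbove_add_le hx hc
  rw [h] at this
  linarith

/-! ### Rank lemmas -/

lemma rk_lt_of_pref {f : F} {v u : W} (hv : 0 < x f v) (_hu : 0 < x f u)
    (hp : M.prefF f v u) : rk M x f v < rk M x f u := by
  apply Finset.card_lt_card
  rw [Finset.ssubset_iff_of_subset]
  · exact ⟨v, Finset.mem_filter.2 ⟨mem_supportRow.2 hv, hp⟩,
      fun hc => M.prefF_irrefl f v (Finset.mem_filter.1 hc).2⟩
  · intro j hj
    rcases Finset.mem_filter.1 hj with ⟨hjS, hjv⟩
    exact Finset.mem_filter.2 ⟨hjS, M.prefF_trans f hjv hp⟩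

lemma rk_injOn {f : F} {v u : W} (hv : 0 < x f v) (hu : 0 < x f u)
    (h : rk M x f v = rk M x f u) : v = u := by
  by_contra hne
  rcases M.prefF_total f v u hne with hp | hp
  · exact absurd h (Nat.ne_of_lt (rk_lt_of_pref hv hu hp))
  · exact absurd h.symm (Nat.ne_of_lt (rk_lt_of_pref hu hv hp))

lemma rk_lt_card {f : F} {v : W} (hv : 0 < x f v) :
    rk M x f v < (M.supportRow x f).card := by
  have h1 : ((M.supportRow x f).filter (fun j => M.prefF f j v)) ⊆
      (M.supportRow x f).erase v := by
    intro j hj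
    rcases Finset.mem_filter.1 hj with ⟨hjS, hjv⟩
    exact Finset.mem_erase.2 ⟨fun hc => M.prefF_irrefl f v (hc ▸ hjv), hjS⟩
  have h2 : rk M x f v ≤ (M.supportRow x f).card - 1 := by
    simpa [rk, Finset.card_erase_of_mem (mem_supportRow.2 hv)] using
      Finset.card_le_card h1
  have h3 : 0 < (M.supportRow x f).card :=
    Finset.card_pos.2 ⟨v, mem_supportRow.2 hv⟩
  omega

lemma card_muX_le (f : F) : (M.muX x f).card ≤ M.q f := by
  have h := Finset.card_le_card_of_injOn (rk M x f)
    (s := M.muX x f) (t := Finset.range (M.q f))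
    (fun v hv => Finset.mem_range.2 (mem_muX_iff.1 hv).2)
    (fun v hv u hu h => rk_injOn (mem_muX_iff.1 hv).1 (mem_muX_iff.1 hu).1 h)
  simpa using h

lemma muX_eq_filter (f : F) :
    M.muX x f = (M.supportRow x f).filter (fun v => rk M x f v < M.q f) := rfl

lemma card_muX_eq {f : F} {v : W} (hv : 0 < x f v) (hnv : v ∉ M.muX x f) :
    (M.muX x f).card = M.q f := by
  have hq : M.q f ≤ rk M x f v := by
    by_contra hc
    exact hnv (mem_muX_iff.2 ⟨hv, not_le.1 hc⟩)
  set S := M.supportRow x f with hS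
  set B := S.filter (fun u => ¬ rk M x f u < M.q f) with hB
  have hsplit : (M.muX x f).card + B.card = S.card := by
    rw [muX_eq_filter]
    exact Finset.card_filter_add_card_filter_not _
  have hBcard : B.card ≤ S.card - M.q f := by
    have h := Finset.card_le_card_of_injOn (rk M x f)
      (s := B) (t := Finset.Ico (M.q f) S.card)
      (fun u hu => by
        rcases Finset.mem_filter.1 hu with ⟨huS, hru⟩
        exact Finset.mem_Ico.2 ⟨not_lt.1 hru, rk_lt_card (mem_supportRow.1 huS)⟩)
      (fun u hu u' hu' h => rk_injOn
        (mem_supportRow.1 (Finset.mem_filter.1 hu).1)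
        (mem_supportRow.1 (Finset.mem_filter.1 hu').1) h)
    simpa [Nat.card_Ico] using h
  have hqS : M.q f < S.card := lt_of_le_of_lt hq (rk_lt_card hv)
  have hle := card_muX_le (M := M) (x := x) f
  omega

lemma all_supp_in_muX {f : F} (h : (M.muX x f).card < M.q f) {v : W}
    (hv : 0 < x f v) : v ∈ M.muX x f := by
  by_contra hc
  rw [card_muX_eq hv hc] at h
  exact lt_irrefl _ h

/-- C5: firms strictly prefer every matched worker to any supported unmatched one. -/
lemma muX_mem_pref {f : F} {v j : W} (hv : 0 < x f v) (hnv : v ∉ M.muX x f)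
    (hj : j ∈ M.muX x f) : M.prefF f j v := by
  rcases mem_muX_iff.1 hj with ⟨hjx, hjr⟩
  have hq : M.q f ≤ rk M x f v := by
    by_contra hc
    exact hnv (mem_muX_iff.2 ⟨hv, not_le.1 hc⟩)
  have hne : j ≠ v := by
    intro hc; subst hc; omega
  rcases M.prefF_total f j v hne with hp | hp
  · exact hp
  · exact absurd (rk_lt_of_pref hv hjx hp) (by omega)

/-- Bound a row-sum over a set by the number of its supported elements. -/
lemma sum_le_card_support (hx : M.StronglyStable x) (f : F) (s : Finset W) :
    ∑ j ∈ s, x f j ≤ ((s.filter (fun j => 0 < x f j)).card : ℝ) := by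
  have h0 : ∑ j ∈ s, x f j = ∑ j ∈ s.filter (fun j => 0 < x f j), x f j := by
    refine (Finset.sum_subset (Finset.filter_subset _ _) ?_).symm
    intro j hj hnj
    exact x_zero_of_not_pos hx
      (fun hpos => hnj (Finset.mem_filter.2 ⟨hj, hpos⟩))
  rw [h0]
  calc ∑ j ∈ s.filter (fun j => 0 < x f j), x f j
      ≤ ∑ _j ∈ s.filter (fun j => 0 < x f j), (1 : ℝ) :=
        Finset.sum_le_sum (fun j _ => x_le_one hx f j)
    _ = _ := by simp

/-- If `w ∈ μ f` and the row above `w` is full, then `x f w = 1`. -/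
lemma x_eq_one_of_rowAbove (hx : M.StronglyStable x) {f : F} {w : W}
    (hw : w ∈ M.muX x f) (h : M.rowSumAbove x f w = (M.q f : ℝ)) : x f w = 1 := by
  rcases mem_muX_iff.1 hw with ⟨hxw, hrw⟩
  have hsub : insert w ((M.supportRow x f).filter (fun j => M.prefF f j w))
      ⊆ Finset.univ.filter (fun j => M.weakF f j w) := by
    intro j hj
    rcases Finset.mem_insert.1 hj with hj | hj
    · subst hj; exact Finset.mem_filter.2 ⟨Finset.mem_univ _, Or.inr rfl⟩
    · exact Finset.mem_filter.2 ⟨Finset.mem_univ _,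
        Or.inl (Finset.mem_filter.1 hj).2⟩
  have hzero : ∀ j ∈ Finset.univ.filter (fun j => M.weakF f j w),
      j ∉ insert w ((M.supportRow x f).filter (fun j => M.prefF f j w)) →
      x f j = 0 := by
    intro j hjT hjA
    rcases (Finset.mem_filter.1 hjT).2 with hp | hp
    · refine x_zero_of_not_pos hx (fun hpos => hjA ?_)
      exact Finset.mem_insert.2
        (Or.inr (Finset.mem_filter.2 ⟨mem_supportRow.2 hpos, hp⟩))
    · exact absurd (by rw [hp]; exact Finset.mem_insert_self _ _) hjA
  have hAT : M.rowSumAbove x f w =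
      ∑ j ∈ insert w ((M.supportRow x f).filter (fun j => M.prefF f j w)), x f j := by
    unfold Market.rowSumAbove
    exact (Finset.sum_subset hsub hzero).symm
  have hwnot : w ∉ (M.supportRow x f).filter (fun j => M.prefF f j w) :=
    fun hc => M.prefF_irrefl f w (Finset.mem_filter.1 hc).2
  rw [Finset.sum_insert hwnot] at hAT
  have hbound : ∑ j ∈ (M.supportRow x f).filter (fun j => M.prefF f j w), x f j
      ≤ (rk M x f w : ℝ) := by
    calc ∑ j ∈ (M.supportRow x f).filter (fun j => M.prefF f j w), x f j
        ≤ ∑ _j ∈ (M.supportRow x f).filter (fun j => M.prefF f j w), (1 : ℝ) :=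
          Finset.sum_le_sum (fun j _ => x_le_one hx f j)
      _ = (rk M x f w : ℝ) := by simp [rk]
  have hq1 : (rk M x f w : ℝ) + 1 ≤ (M.q f : ℝ) := by exact_mod_cast hrw
  have hle1 := x_le_one hx f w
  rw [h] at hAT
  linarith

/-- Uniqueness: a worker belongs to at most one `μ_x(f)`. -/
lemma muX_unique (hx : M.StronglyStable x) {w : W} {f f' : F}
    (hf : w ∈ M.muX x f) (hf' : w ∈ M.muX x f') : f = f' := by
  by_contra hne
  have key : ∀ g g' : F, M.prefW w g g' → w ∈ M.muX x g → w ∈ M.muX x g' → False := by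
    intro g g' hp hg hg'
    have hxg : 0 < x g w := pos_of_mem_muX hg
    have hxg' : 0 < x g' w := pos_of_mem_muX hg'
    have hgg' : g ≠ g' := by
      intro hc; rw [hc] at hp; exact M.prefW_irrefl w g' hp
    rcases dichotomy hx (acc_of_pos hx hxg) with h | h
    · have h1 := x_eq_one_of_rowAbove hx hg h
      have h2 := two_le_colsum hx hgg' w
      linarith
    · rcases weak_of_pos hx h hxg' with h' | h'
      · exact M.prefW_irrefl w g (M.prefW_trans w hp h')
      · exact hgg' h'.symm
  rcases M.prefW_total w f f' hne with hp | hp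
  · exact (key f f' hp hf hf').elim
  · exact (key f' f hp hf' hf).elim

/-- Reachability closure used in the blocking argument. -/
inductive Reached (M : Market F W) (x : F → W → ℝ) (w : W) : W → Prop
  | base : Reached M x w w
  | step {v : W} {i : F} {j : W} : Reached M x w v → 0 < x i v → v ∉ M.muX x i →
      j ∈ M.muX x i → Reached M x w j

end MuXStableAux

open MuXStableAux

/-- For a strongly stable fractional matching `x`, the matching `μ_x` sending
each firm to its `q f` best workers in the support of `x` is stable. -/
theorem muX_stable {F W : Type*} [Fintype F] [Fintype W]
    (M : Market F W) (x : F → W → ℝ) (hx : M.StronglyStable x) :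
    M.isStable (M.muX x) := by
  classical
  refine ⟨⟨fun f => card_muX_le f, fun w f f' hf hf' => muX_unique hx hf hf'⟩,
    fun f w hw => acc_of_pos hx (pos_of_mem_muX hw), ?_⟩
  intro f w hb
  obtain ⟨hnot, hacc, hbetter, hcond⟩ := hb
  -- Step 3a : `x f w = 0`.
  have hxfw : x f w = 0 := by
    refine x_zero_of_not_pos hx (fun hpos => ?_)
    rcases hcond with hlt | ⟨w', hw', hp⟩
    · exact hnot (all_supp_in_muX hlt hpos)
    · rcases mem_muX_iff.1 hw' with ⟨hxw', hrw'⟩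
      have h1 := rk_lt_of_pref hpos hxw' hp
      exact hnot (mem_muX_iff.2 ⟨hpos, by omega⟩)
  -- Step 3b : the row above `w` is not full.
  have hrow_eq : M.rowSumAbove x f w
      = ∑ j ∈ Finset.univ.filter (fun j => M.weakF f j w), x f j := rfl
  have hbnd : M.rowSumAbove x f w ≤
      (((Finset.univ.filter (fun j => M.weakF f j w)).filter
        (fun j => 0 < x f j)).card : ℝ) := by
    rw [hrow_eq]; exact sum_le_card_support hx f _
  have hrowlt : M.rowSumAbove x f w < (M.q f : ℝ) := by
    rcases hcond with hlt | ⟨w', hw', hp⟩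
    · have hsub : (Finset.univ.filter (fun j => M.weakF f j w)).filter
          (fun j => 0 < x f j) ⊆ M.muX x f := by
        intro j hj
        exact all_supp_in_muX hlt (Finset.mem_filter.1 hj).2
      have hcard := Finset.card_le_card hsub
      have h2 : M.rowSumAbove x f w ≤ ((M.muX x f).card : ℝ) :=
        le_trans hbnd (by exact_mod_cast hcard)
      have hcast : ((M.muX x f).card : ℝ) < (M.q f : ℝ) := by exact_mod_cast hlt
      linarith
    · rcases mem_muX_iff.1 hw' with ⟨hxw', hrw'⟩
      have hsub : (Finset.univ.filter (fun j => M.weakF f j w)).filter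
          (fun j => 0 < x f j)
          ⊆ (M.supportRow x f).filter (fun j => M.prefF f j w') := by
        intro j hj
        rcases Finset.mem_filter.1 hj with ⟨hj1, hj2⟩
        have hjw : M.weakF f j w := (Finset.mem_filter.1 hj1).2
        refine Finset.mem_filter.2 ⟨mem_supportRow.2 hj2, ?_⟩
        rcases hjw with h' | h'
        · exact M.prefF_trans f h' hp
        · rw [h']; exact hp
      have hcard := Finset.card_le_card hsub
      have h2 : M.rowSumAbove x f w ≤ (rk M x f w' : ℝ) :=
        le_trans hbnd (by exact_mod_cast hcard)
      have hcast : (rk M x f w' : ℝ) < (M.q f : ℝ) := by exact_mod_cast hrw'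
      linarith
  -- Step 3c : `w`'s column is full.
  have hcolone : M.colSumAbove x w f = 1 := by
    rcases dichotomy hx hacc with h | h
    · rw [h] at hrowlt; exact absurd hrowlt (lt_irrefl _)
    · exact h
  have hcolsum : ∑ i, x i w = 1 := colsum_one_of_colAbove hx hcolone
  -- Step 3d : `w` is matched to no firm in `μ_x`.
  have hwnomu : ∀ k, w ∉ M.muX x k := by
    intro k hk
    have hxk : 0 < x k w := pos_of_mem_muX hk
    rcases weak_of_pos hx hcolone hxk with h' | h'
    · exact M.prefW_irrefl w k (M.prefW_trans w h' (hbetter k hk))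
    · rw [h'] at hk; exact hnot hk
  -- The closure counting argument.
  set V := Finset.univ.filter (fun v => Reached M x w v) with hV
  set G := Finset.univ.filter
    (fun i => ∃ v, Reached M x w v ∧ 0 < x i v ∧ v ∉ M.muX x i) with hG
  have colsum_reached : ∀ v, Reached M x w v → ∑ i, x i v = 1 := by
    intro v h
    induction h with
    | base => exact hcolsum
    | step hv hpos hnmem hmem ih =>
        exact colsum_one_of_colAbove hx
          (colAbove_one_of_better hx hpos (pos_of_mem_muX hmem)
            (muX_mem_pref hpos hnmem hmem))
  have hzero : ∀ i, i ∉ G → ∀ v ∈ V, x i v = 0 := by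
    intro i hiG v hvV
    have hvR : Reached M x w v := (Finset.mem_filter.1 hvV).2
    refine x_zero_of_not_pos hx (fun hpos => ?_)
    by_cases hvmu : v ∈ M.muX x i
    · have hvw : v ≠ w := fun hc => hwnomu i (hc ▸ hvmu)
      cases hvR with
      | base => exact hvw rfl
      | step hv0 hpos0 hn0 hm0 =>
          cases muX_unique hx hvmu hm0
          exact hiG (Finset.mem_filter.2 ⟨Finset.mem_univ _, _, hv0, hpos0, hn0⟩)
    · exact hiG (Finset.mem_filter.2 ⟨Finset.mem_univ _, v, hvR, hpos, hvmu⟩)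
  have hVcard : (V.card : ℝ) = ∑ v ∈ V, ∑ i, x i v := by
    have h1 : ∑ v ∈ V, ∑ i, x i v = ∑ _v ∈ V, (1 : ℝ) :=
      Finset.sum_congr rfl
        (fun v hv => colsum_reached v (Finset.mem_filter.1 hv).2)
    rw [h1]; simp
  have hswap : ∑ v ∈ V, ∑ i, x i v = ∑ i, ∑ v ∈ V, x i v := Finset.sum_comm
  have hGsum : ∑ i, ∑ v ∈ V, x i v = ∑ i ∈ G, ∑ v ∈ V, x i v := by
    refine (Finset.sum_subset (Finset.subset_univ G) ?_).symm
    intro i _ hiG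
    exact Finset.sum_eq_zero (fun v hv => hzero i hiG v hv)
  have hGbound : ∑ i ∈ G, ∑ v ∈ V, x i v ≤ ∑ i ∈ G, (M.q i : ℝ) := by
    refine Finset.sum_le_sum (fun i _ => ?_)
    calc ∑ v ∈ V, x i v ≤ ∑ v, x i v :=
          Finset.sum_le_sum_of_subset_of_nonneg (Finset.subset_univ _)
            (fun v _ _ => hx.1.1 i v)
      _ ≤ (M.q i : ℝ) := rowsum_le hx i
  have hqcard : ∀ i ∈ G, M.q i = (M.muX x i).card := by
    intro i hi
    rcases (Finset.mem_filter.1 hi).2 with ⟨v, hvR, hpos, hnm⟩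
    exact (card_muX_eq hpos hnm).symm
  have hdisj : ∀ i ∈ G, ∀ i' ∈ G, i ≠ i' → Disjoint (M.muX x i) (M.muX x i') := by
    intro i _ i' _ hne
    exact Finset.disjoint_left.2 (fun v hv hv' => hne (muX_unique hx hv hv'))
  have hbU : (G.biUnion (fun i => M.muX x i)).card = ∑ i ∈ G, (M.muX x i).card :=
    Finset.card_biUnion hdisj
  have hwV : w ∈ V := Finset.mem_filter.2 ⟨Finset.mem_univ _, Reached.base⟩
  have hsubV : G.biUnion (fun i => M.muX x i) ⊆ V.erase w := by
    intro v hv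
    rcases Finset.mem_biUnion.1 hv with ⟨i, hiG, hvi⟩
    rcases (Finset.mem_filter.1 hiG).2 with ⟨v0, hv0R, hpos0, hn0⟩
    refine Finset.mem_erase.2 ⟨fun hc => hwnomu i (hc ▸ hvi), ?_⟩
    exact Finset.mem_filter.2
      ⟨Finset.mem_univ _, Reached.step hv0R hpos0 hn0 hvi⟩
  have hVpos : 1 ≤ V.card := Finset.card_pos.2 ⟨w, hwV⟩
  have hnat : ∑ i ∈ G, M.q i ≤ V.card - 1 := by
    calc ∑ i ∈ G, M.q i = ∑ i ∈ G, (M.muX x i).card := Finset.sum_congr rfl hqcard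
      _ = (G.biUnion (fun i => M.muX x i)).card := hbU.symm
      _ ≤ (V.erase w).card := Finset.card_le_card hsubV
      _ = V.card - 1 := by rw [Finset.card_erase_of_mem hwV]
  have hreal : (V.card : ℝ) ≤ ((∑ i ∈ G, M.q i : ℕ) : ℝ) := by
    rw [hVcard, hswap, hGsum]
    push_cast
    exact hGbound
  have hfin : V.card ≤ ∑ i ∈ G, M.q i := by exact_mod_cast hreal
  omega
end

section
/- Every strongly stable fractional matching x̄ in a many-to-one matching market can be written as a convex combination x̄ = Σ_{l=1}^{k} α_l · x^{μ^l} of incidence vectors of stable matchings μ^1, …, μ^k with all α_l > 0, Σ α_l = 1, and μ^1 ≻_F μ^2 ≻_F … ≻_F μ^k, i.e. the stable matchings are strictly ordered so that every firm weakly prefers μ^l to μ^{l+1} and at least one firm strictly prefers it. -/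
open Finset
open scoped Classical

namespace SSProof
set_option linter.unusedSectionVars false
open Finset
variable {F W : Type*} [Fintype F] [Fintype W] (M : Market F W) (x : F → W → ℝ)

/-! ### order facts -/

lemma weakF_refl (f : F) (w : W) : M.weakF f w w := Or.inr rfl

lemma weakW_refl (w : W) (f : F) : M.weakW w f f := Or.inr rfl

lemma prefF_asymm {f : F} {j w : W} (h : M.prefF f j w) : ¬ M.prefF f w j :=
  fun h' => M.prefF_irrefl f j (M.prefF_trans f h h')

lemma prefW_asymm {w : W} {i f : F} (h : M.prefW w i f) : ¬ M.prefW w f i :=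
  fun h' => M.prefW_irrefl w i (M.prefW_trans w h h')

lemma not_weakF_of_pref {f : F} {j w : W} (h : M.prefF f w j) : ¬ M.weakF f j w := by
  rintro (h' | e)
  · exact prefF_asymm M h h'
  · exact M.prefF_irrefl f w (e ▸ h)

lemma not_weakW_of_pref {w : W} {i f : F} (h : M.prefW w f i) : ¬ M.weakW w i f := by
  rintro (h' | e)
  · exact prefW_asymm M h h'
  · exact M.prefW_irrefl w f (e ▸ h)

lemma pref_of_not_weakF {f : F} {j w : W} (h : ¬ M.weakF f j w) : M.prefF f w j := by
  rcases M.prefF_total f j w (fun e => h (Or.inr e)) with h' | h'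
  · exact absurd (Or.inl h') h
  · exact h'

lemma pref_of_not_weakW {w : W} {i f : F} (h : ¬ M.weakW w i f) : M.prefW w f i := by
  rcases M.prefW_total w i f (fun e => h (Or.inr e)) with h' | h'
  · exact absurd (Or.inl h') h
  · exact h'

lemma weakF_trans_pref {f : F} {b m w : W} (h1 : M.prefF f b m) (h2 : M.weakF f m w) :
    M.weakF f b w := by
  rcases h2 with h2 | rfl
  · exact Or.inl (M.prefF_trans f h1 h2)
  · exact Or.inl h1

/-! ### basic consequences of SCP -/

variable {M x}

section Basic
variable (hx : M.StronglyStable x)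
include hx

lemma xnn (f : F) (w : W) : 0 ≤ x f w := hx.1.1 f w

lemma colsum_le_one (w : W) : ∑ i, x i w ≤ 1 := hx.1.2.2.1 w

lemma rowsum_le_q (f : F) : ∑ j, x f j ≤ (M.q f : ℝ) := hx.1.2.1 f

lemma xle1 (f : F) (w : W) : x f w ≤ 1 :=
  le_trans (Finset.single_le_sum (fun i _ => hx.1.1 i w) (mem_univ f)) (hx.1.2.2.1 w)

lemma acc_of_pos {f : F} {w : W} (h : 0 < x f w) : M.acceptable f w := by
  by_contra hc
  exact absurd (hx.1.2.2.2.1 f w hc) (ne_of_gt h)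

lemma strongAlt {f : F} {w : W} (hacc : M.acceptable f w) :
    M.rowSumAbove x f w = (M.q f : ℝ) ∨ M.colSumAbove x w f = 1 := by
  have h := hx.2 f w hacc
  unfold Market.StrongCondAt at h
  rcases mul_eq_zero.1 h with h' | h'
  · left; linarith [sub_eq_zero.1 h']
  · right; linarith [sub_eq_zero.1 h']

lemma Rq_full {f : F} {w : W} (h : M.rowSumAbove x f w = (M.q f : ℝ)) :
    (∑ j, x f j = (M.q f : ℝ)) ∧ ∀ j, M.prefF f w j → x f j = 0 := by
  have hsplit : M.rowSumAbove x f w + ∑ j ∈ univ.filter (fun j => ¬ M.weakF f j w), x f j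
      = ∑ j, x f j := Finset.sum_filter_add_sum_filter_not univ _ _
  have hq := rowsum_le_q hx f
  have hrest_nn : (0:ℝ) ≤ ∑ j ∈ univ.filter (fun j => ¬ M.weakF f j w), x f j :=
    Finset.sum_nonneg (fun j _ => hx.1.1 f j)
  have hrest0 : ∑ j ∈ univ.filter (fun j => ¬ M.weakF f j w), x f j = 0 := by linarith
  have hz : ∀ j ∈ univ.filter (fun j => ¬ M.weakF f j w), x f j = 0 :=
    (Finset.sum_eq_zero_iff_of_nonneg (fun j _ => hx.1.1 f j)).1 hrest0
  constructor
  · linarith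
  · intro j hj
    exact hz j (mem_filter.2 ⟨mem_univ j, not_weakF_of_pref M hj⟩)

lemma C1_full {f : F} {w : W} (h : M.colSumAbove x w f = 1) :
    (∑ i, x i w = 1) ∧ ∀ i, M.prefW w f i → x i w = 0 := by
  have hsplit : M.colSumAbove x w f + ∑ i ∈ univ.filter (fun i => ¬ M.weakW w i f), x i w
      = ∑ i, x i w := Finset.sum_filter_add_sum_filter_not univ _ _
  have hq := colsum_le_one hx w
  have hrest_nn : (0:ℝ) ≤ ∑ i ∈ univ.filter (fun i => ¬ M.weakW w i f), x i w :=
    Finset.sum_nonneg (fun i _ => hx.1.1 i w)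
  have hrest0 : ∑ i ∈ univ.filter (fun i => ¬ M.weakW w i f), x i w = 0 := by linarith
  have hz : ∀ i ∈ univ.filter (fun i => ¬ M.weakW w i f), x i w = 0 :=
    (Finset.sum_eq_zero_iff_of_nonneg (fun i _ => hx.1.1 i w)).1 hrest0
  constructor
  · linarith
  · intro i hi
    exact hz i (mem_filter.2 ⟨mem_univ i, not_weakW_of_pref M hi⟩)

end Basic

variable (M) (x)

/-- Fractional pairs. -/
noncomputable def Phi : Finset (F × W) :=
  univ.filter (fun p => 0 < x p.1 p.2 ∧ x p.1 p.2 < 1)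

/-- Fully assigned workers of a firm. -/
noncomputable def Ints (f : F) : Finset W := univ.filter (fun j => x f j = 1)

def pf (p : F × W) : Prop := M.rowSumAbove x p.1 p.2 = (M.q p.1 : ℝ)

def pw (p : F × W) : Prop := M.colSumAbove x p.2 p.1 = 1

variable {M x}

lemma mem_Phi {p : F × W} : p ∈ Phi x ↔ 0 < x p.1 p.2 ∧ x p.1 p.2 < 1 := by
  unfold Phi; rw [Finset.mem_filter]; simp

section ML
variable (hx : M.StronglyStable x)
include hx

lemma Phi_cover {p : F × W} (hp : p ∈ Phi x) : pf M x p ∨ pw M x p :=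
  strongAlt hx (acc_of_pos hx (mem_Phi.1 hp).1)

lemma pf_inj {p p' : F × W} (hp : p ∈ Phi x) (hp' : p' ∈ Phi x)
    (h : pf M x p) (h' : pf M x p') (he : p.1 = p'.1) : p = p' := by
  by_contra hne
  have hww : p.2 ≠ p'.2 := by
    intro e; exact hne (Prod.ext he e)
  rcases M.prefF_total p.1 p.2 p'.2 hww with hlt | hlt
  · -- p.2 preferred to p'.2, pf at p kills p'.2
    have := (Rq_full hx h).2 p'.2 hlt
    have h2 : 0 < x p.1 p'.2 := by rw [he]; exact (mem_Phi.1 hp').1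
    exact absurd this (ne_of_gt h2)
  · have h0 := (Rq_full hx h').2 p.2 (he ▸ hlt)
    have h2 : 0 < x p'.1 p.2 := by rw [← he]; exact (mem_Phi.1 hp).1
    exact absurd h0 (ne_of_gt h2)

lemma pw_inj {p p' : F × W} (hp : p ∈ Phi x) (hp' : p' ∈ Phi x)
    (h : pw M x p) (h' : pw M x p') (he : p.2 = p'.2) : p = p' := by
  by_contra hne
  have hff : p.1 ≠ p'.1 := by
    intro e; exact hne (Prod.ext e he)
  rcases M.prefW_total p.2 p.1 p'.1 hff with hlt | hlt
  · -- p.1 preferred, pw at p kills p'.1 : C1_full at p gives ∀ i, prefW p.2 p.1 i → x i p.2 = 0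
    have h0 := (C1_full hx h).2 p'.1 hlt
    have h2 : 0 < x p'.1 p.2 := by rw [he]; exact (mem_Phi.1 hp').1
    exact absurd h0 (ne_of_gt h2)
  · have h0 := (C1_full hx h').2 p.1 (he ▸ hlt)
    have h2 : 0 < x p.1 p'.2 := by rw [← he]; exact (mem_Phi.1 hp).1
    exact absurd h0 (ne_of_gt h2)

omit hx in
/-- sum over a set where every entry is 0 or 1 equals a card -/
lemma sum_zero_one {s : Finset W} {f : F} (h : ∀ j ∈ s, x f j = 0 ∨ x f j = 1) :
    ∑ j ∈ s, x f j = ((s.filter (fun j => x f j = 1)).card : ℝ) := by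
  rw [Finset.card_filter]
  push_cast
  refine Finset.sum_congr rfl (fun j hj => ?_)
  rcases h j hj with h0 | h1
  · rw [h0]; simp [h0]
  · simp [h1]

lemma frac_or_int {f : F} {j : W} (h : (f, j) ∉ Phi x) : x f j = 0 ∨ x f j = 1 := by
  have h1 := xnn hx f j
  have h2 := xle1 hx f j
  rcases lt_or_eq_of_le h1 with hlt | he
  · rcases lt_or_eq_of_le h2 with hlt2 | he2
    · exact absurd (mem_Phi.2 ⟨hlt, hlt2⟩) h
    · exact Or.inr he2
  · exact Or.inl he.symm

lemma two_le_fiberF {p : F × W} (hp : p ∈ Phi x) (h : pf M x p) :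
    2 ≤ ((Phi x).filter (fun p' => p'.1 = p.1)).card := by
  by_contra hc
  push_neg at hc
  have hone : ((Phi x).filter (fun p' => p'.1 = p.1)).card ≤ 1 := by omega
  have hmem : p ∈ (Phi x).filter (fun p' => p'.1 = p.1) := mem_filter.2 ⟨hp, rfl⟩
  have hsingle : ∀ p' ∈ (Phi x).filter (fun p' => p'.1 = p.1), p' = p := by
    intro p' hp'
    exact Finset.card_le_one.1 hone p' hp' p hmem
  -- all j ≠ p.2 have x p.1 j ∈ {0,1}
  have hzo : ∀ j ∈ univ.erase p.2, x p.1 j = 0 ∨ x p.1 j = 1 := by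
    intro j hj
    refine frac_or_int hx (fun hmem' => ?_)
    have := hsingle (p.1, j) (mem_filter.2 ⟨hmem', rfl⟩)
    exact (Finset.mem_erase.1 hj).1 (congrArg Prod.snd this)
  have hsum := sum_zero_one (x := x) hzo
  have htot : x p.1 p.2 + ∑ j ∈ univ.erase p.2, x p.1 j = ∑ j, x p.1 j :=
    Finset.add_sum_erase univ (fun j => x p.1 j) (mem_univ p.2)
  have hq : ∑ j, x p.1 j = (M.q p.1 : ℝ) := (Rq_full hx h).1
  rw [hsum] at htot
  set n := ((univ.erase p.2).filter (fun j => x p.1 j = 1)).card with hn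
  have hx1 : x p.1 p.2 = (M.q p.1 : ℝ) - n := by linarith
  have hfrac := mem_Phi.1 hp
  have h1 : (n : ℝ) < (M.q p.1 : ℝ) := by linarith [hfrac.1]
  have h2 : (M.q p.1 : ℝ) < (n : ℝ) + 1 := by linarith [hfrac.2]
  have h1' : n < M.q p.1 := by exact_mod_cast h1
  have h2' : M.q p.1 < n + 1 := by exact_mod_cast h2
  omega

lemma two_le_fiberW {p : F × W} (hp : p ∈ Phi x) (h : pw M x p) :
    2 ≤ ((Phi x).filter (fun p' => p'.2 = p.2)).card := by
  by_contra hc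
  push_neg at hc
  have hone : ((Phi x).filter (fun p' => p'.2 = p.2)).card ≤ 1 := by omega
  have hmem : p ∈ (Phi x).filter (fun p' => p'.2 = p.2) := mem_filter.2 ⟨hp, rfl⟩
  have hsingle : ∀ p' ∈ (Phi x).filter (fun p' => p'.2 = p.2), p' = p := by
    intro p' hp'
    exact Finset.card_le_one.1 hone p' hp' p hmem
  have hzo : ∀ i ∈ univ.erase p.1, x i p.2 = 0 ∨ x i p.2 = 1 := by
    intro i hi
    have h1 := xnn hx i p.2
    have h2 := xle1 hx i p.2
    rcases lt_or_eq_of_le h1 with hlt | he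
    · rcases lt_or_eq_of_le h2 with hlt2 | he2
      · exfalso
        have hmem' : (i, p.2) ∈ Phi x := mem_Phi.2 ⟨hlt, hlt2⟩
        have := hsingle (i, p.2) (mem_filter.2 ⟨hmem', rfl⟩)
        exact (Finset.mem_erase.1 hi).1 (congrArg Prod.fst this)
      · exact Or.inr he2
    · exact Or.inl he.symm
  -- T = 1
  have hT : ∑ i, x i p.2 = 1 := (C1_full hx h).1
  have htot : x p.1 p.2 + ∑ i ∈ univ.erase p.1, x i p.2 = ∑ i, x i p.2 :=
    Finset.add_sum_erase univ (fun i => x i p.2) (mem_univ p.1)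
  have hsum : ∑ i ∈ univ.erase p.1, x i p.2
      = (((univ.erase p.1).filter (fun i => x i p.2 = 1)).card : ℝ) := by
    rw [Finset.card_filter]
    push_cast
    refine Finset.sum_congr rfl (fun i hi => ?_)
    rcases hzo i hi with h0 | h1
    · simp [h0]
    · simp [h1]
  rw [hsum] at htot
  set n := ((univ.erase p.1).filter (fun i => x i p.2 = 1)).card with hn
  have hfrac := mem_Phi.1 hp
  have hx1 : x p.1 p.2 = 1 - (n : ℝ) := by linarith
  have h1 : (n : ℝ) < 1 := by linarith [hfrac.1]
  have h2 : (0 : ℝ) < (n : ℝ) + 0 + 1 - 1 + (1 - x p.1 p.2) := by linarith [hfrac.2]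
  have h1' : n < 1 := by exact_mod_cast h1
  -- n = 0, so x p.1 p.2 = 1, contradiction with < 1
  have : n = 0 := by omega
  rw [this] at hx1
  simp at hx1
  linarith [hfrac.2]

end ML

lemma sum_two_helper {γ : Type*} {s : Finset γ} {g : γ → ℕ} (h : ∀ i ∈ s, 2 ≤ g i)
    (he : ∑ i ∈ s, g i = 2 * s.card) : ∀ i ∈ s, g i = 2 := by
  intro i hi
  by_contra hne
  have h3 : 3 ≤ g i := by have := h i hi; omega
  have hsplit : ∑ j ∈ s, g j = g i + ∑ j ∈ s.erase i, g j := (Finset.add_sum_erase s g hi).symm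
  have hlow : 2 * (s.erase i).card ≤ ∑ j ∈ s.erase i, g j := by
    calc 2 * (s.erase i).card = ∑ _j ∈ s.erase i, 2 := by
          rw [Finset.sum_const, smul_eq_mul, mul_comm]
      _ ≤ ∑ j ∈ s.erase i, g j :=
          Finset.sum_le_sum (fun j hj => h j (Finset.mem_of_mem_erase hj))
  have hcard : (s.erase i).card = s.card - 1 := Finset.card_erase_of_mem hi
  have hpos : 1 ≤ s.card := Finset.card_pos.2 ⟨i, hi⟩
  omega



section ML2
variable (hx : M.StronglyStable x)
include hx

lemma ml_count :
    (∀ p ∈ Phi x, ¬ (pf M x p ∧ pw M x p)) ∧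
    (∀ p ∈ Phi x, ((Phi x).filter (fun p' => p'.1 = p.1)).card = 2 ∧
        ∃ pm ∈ Phi x, pm.1 = p.1 ∧ pf M x pm) ∧
    (∀ p ∈ Phi x, ((Phi x).filter (fun p' => p'.2 = p.2)).card = 2 ∧
        ∃ pm ∈ Phi x, pm.2 = p.2 ∧ pw M x pm) := by
  classical
  set P := Phi x with hP
  set A := P.filter (pf M x) with hA
  set B := P.filter (pw M x) with hB
  have hinjA : ∀ p ∈ A, ∀ p' ∈ A, p.1 = p'.1 → p = p' := by
    intro p hp p' hp' he
    exact pf_inj hx (mem_filter.1 hp).1 (mem_filter.1 hp').1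
      (mem_filter.1 hp).2 (mem_filter.1 hp').2 he
  have hinjB : ∀ p ∈ B, ∀ p' ∈ B, p.2 = p'.2 → p = p' := by
    intro p hp p' hp' he
    exact pw_inj hx (mem_filter.1 hp).1 (mem_filter.1 hp').1
      (mem_filter.1 hp).2 (mem_filter.1 hp').2 he
  have hcardA : (A.image Prod.fst).card = A.card :=
    Finset.card_image_of_injOn (fun p hp p' hp' he => hinjA p hp p' hp' he)
  have hcardB : (B.image Prod.snd).card = B.card :=
    Finset.card_image_of_injOn (fun p hp p' hp' he => hinjB p hp p' hp' he)
  have hfibA : ∀ f ∈ A.image Prod.fst, 2 ≤ (P.filter (fun p' => p'.1 = f)).card := by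
    intro f hf
    obtain ⟨p, hp, rfl⟩ := Finset.mem_image.1 hf
    exact two_le_fiberF hx (mem_filter.1 hp).1 (mem_filter.1 hp).2
  have hfibB : ∀ w ∈ B.image Prod.snd, 2 ≤ (P.filter (fun p' => p'.2 = w)).card := by
    intro w hw
    obtain ⟨p, hp, rfl⟩ := Finset.mem_image.1 hw
    exact two_le_fiberW hx (mem_filter.1 hp).1 (mem_filter.1 hp).2
  have hPsumF : P.card = ∑ f : F, (P.filter (fun p' => p'.1 = f)).card :=
    Finset.card_eq_sum_card_fiberwise (fun p _ => mem_univ p.1)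
  have hPsumW : P.card = ∑ w : W, (P.filter (fun p' => p'.2 = w)).card :=
    Finset.card_eq_sum_card_fiberwise (fun p _ => mem_univ p.2)
  have hA2 : 2 * A.card ≤ ∑ f ∈ A.image Prod.fst, (P.filter (fun p' => p'.1 = f)).card := by
    calc 2 * A.card = ∑ _f ∈ A.image Prod.fst, 2 := by
          rw [Finset.sum_const, smul_eq_mul, hcardA, mul_comm]
      _ ≤ _ := Finset.sum_le_sum hfibA
  have hB2 : 2 * B.card ≤ ∑ w ∈ B.image Prod.snd, (P.filter (fun p' => p'.2 = w)).card := by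
    calc 2 * B.card = ∑ _w ∈ B.image Prod.snd, 2 := by
          rw [Finset.sum_const, smul_eq_mul, hcardB, mul_comm]
      _ ≤ _ := Finset.sum_le_sum hfibB
  have hsubA : ∑ f ∈ A.image Prod.fst, (P.filter (fun p' => p'.1 = f)).card
      ≤ ∑ f : F, (P.filter (fun p' => p'.1 = f)).card :=
    Finset.sum_le_sum_of_subset (Finset.subset_univ _)
  have hsubB : ∑ w ∈ B.image Prod.snd, (P.filter (fun p' => p'.2 = w)).card
      ≤ ∑ w : W, (P.filter (fun p' => p'.2 = w)).card :=
    Finset.sum_le_sum_of_subset (Finset.subset_univ _)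
  have hcover : P ⊆ A ∪ B := by
    intro p hp
    rcases Phi_cover hx hp with h | h
    · exact Finset.mem_union_left _ (mem_filter.2 ⟨hp, h⟩)
    · exact Finset.mem_union_right _ (mem_filter.2 ⟨hp, h⟩)
  have hcov : P.card ≤ A.card + B.card :=
    le_trans (Finset.card_le_card hcover) (Finset.card_union_le A B)
  have hAP : 2 * A.card ≤ P.card := by rw [hPsumF]; exact le_trans hA2 hsubA
  have hBP : 2 * B.card ≤ P.card := by rw [hPsumW]; exact le_trans hB2 hsubB
  have hAeq : 2 * A.card = P.card := by omega
  have hBeq : 2 * B.card = P.card := by omega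
  -- disjointness
  have hunion : A ∪ B = P := by
    apply Finset.Subset.antisymm _ hcover
    intro p hp
    rcases Finset.mem_union.1 hp with h | h
    · exact (mem_filter.1 h).1
    · exact (mem_filter.1 h).1
  have hinter : (A ∩ B).card = 0 := by
    have := Finset.card_union_add_card_inter A B
    rw [hunion] at this
    omega
  have hdisj : ∀ p ∈ Phi x, ¬ (pf M x p ∧ pw M x p) := by
    intro p hp ⟨h1, h2⟩
    have : p ∈ A ∩ B := Finset.mem_inter.2 ⟨mem_filter.2 ⟨hp, h1⟩, mem_filter.2 ⟨hp, h2⟩⟩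
    rw [Finset.card_eq_zero.1 hinter] at this
    exact absurd this (Finset.notMem_empty p)
  -- fiber equalities, firm side
  have hedgeF : ∑ f ∈ A.image Prod.fst, (P.filter (fun p' => p'.1 = f)).card = 2 * A.card := by
    omega
  have hzeroF : ∀ f : F, f ∉ A.image Prod.fst → (P.filter (fun p' => p'.1 = f)).card = 0 := by
    intro f hf
    have hsd : ∑ g ∈ (univ : Finset F) \ A.image Prod.fst, (P.filter (fun p' => p'.1 = g)).card
        + ∑ g ∈ A.image Prod.fst, (P.filter (fun p' => p'.1 = g)).card
        = ∑ g : F, (P.filter (fun p' => p'.1 = g)).card :=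
      Finset.sum_sdiff (Finset.subset_univ _)
    have hz : ∑ g ∈ (univ : Finset F) \ A.image Prod.fst, (P.filter (fun p' => p'.1 = g)).card = 0 := by
      omega
    have := (Finset.sum_eq_zero_iff.1 hz) f (Finset.mem_sdiff.2 ⟨mem_univ f, hf⟩)
    exact this
  have hfib2F : ∀ f ∈ A.image Prod.fst, (P.filter (fun p' => p'.1 = f)).card = 2 := by
    apply sum_two_helper hfibA
    rw [hedgeF, hcardA]
  -- fiber equalities, worker side
  have hedgeW : ∑ w ∈ B.image Prod.snd, (P.filter (fun p' => p'.2 = w)).card = 2 * B.card := by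
    omega
  have hzeroW : ∀ w : W, w ∉ B.image Prod.snd → (P.filter (fun p' => p'.2 = w)).card = 0 := by
    intro w hw
    have hsd : ∑ v ∈ (univ : Finset W) \ B.image Prod.snd, (P.filter (fun p' => p'.2 = v)).card
        + ∑ v ∈ B.image Prod.snd, (P.filter (fun p' => p'.2 = v)).card
        = ∑ v : W, (P.filter (fun p' => p'.2 = v)).card :=
      Finset.sum_sdiff (Finset.subset_univ _)
    have hz : ∑ v ∈ (univ : Finset W) \ B.image Prod.snd, (P.filter (fun p' => p'.2 = v)).card = 0 := by
      omega
    exact (Finset.sum_eq_zero_iff.1 hz) w (Finset.mem_sdiff.2 ⟨mem_univ w, hw⟩)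
  have hfib2W : ∀ w ∈ B.image Prod.snd, (P.filter (fun p' => p'.2 = w)).card = 2 := by
    apply sum_two_helper hfibB
    rw [hedgeW, hcardB]
  refine ⟨hdisj, ?_, ?_⟩
  · intro p hp
    have hfmem : p.1 ∈ A.image Prod.fst := by
      by_contra hc
      have h0 := hzeroF p.1 hc
      have : p ∈ P.filter (fun p' => p'.1 = p.1) := mem_filter.2 ⟨hp, rfl⟩
      rw [Finset.card_eq_zero.1 h0] at this
      exact absurd this (Finset.notMem_empty p)
    refine ⟨hfib2F p.1 hfmem, ?_⟩
    obtain ⟨pm, hpm, he⟩ := Finset.mem_image.1 hfmem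
    exact ⟨pm, (mem_filter.1 hpm).1, he, (mem_filter.1 hpm).2⟩
  · intro p hp
    have hwmem : p.2 ∈ B.image Prod.snd := by
      by_contra hc
      have h0 := hzeroW p.2 hc
      have : p ∈ P.filter (fun p' => p'.2 = p.2) := mem_filter.2 ⟨hp, rfl⟩
      rw [Finset.card_eq_zero.1 h0] at this
      exact absurd this (Finset.notMem_empty p)
    refine ⟨hfib2W p.2 hwmem, ?_⟩
    obtain ⟨pm, hpm, he⟩ := Finset.mem_image.1 hwmem
    exact ⟨pm, (mem_filter.1 hpm).1, he, (mem_filter.1 hpm).2⟩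

end ML2
structure FirmII (M : Market F W) (x : F → W → ℝ) (f : F) (m b : W) : Prop where
  hm : (f, m) ∈ Phi x
  hb : (f, b) ∈ Phi x
  horder : M.prefF f b m
  hpfm : M.rowSumAbove x f m = (M.q f : ℝ)
  hCm : M.colSumAbove x m f ≠ 1
  hCb : M.colSumAbove x b f = 1
  hsum1 : x f m + x f b = 1
  hqc : M.q f = (Ints x f).card + 1
  hothers : ∀ j, 0 < x f j → j ≠ m → j ≠ b → x f j = 1
  hS : ∑ j, x f j = (M.q f : ℝ)

structure WorkerII (M : Market F W) (x : F → W → ℝ) (w : W) (fu gl : F) : Prop where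
  hfu : (fu, w) ∈ Phi x
  hgl : (gl, w) ∈ Phi x
  horder : M.prefW w fu gl
  hCgl : M.colSumAbove x w gl = 1
  hCfux : M.colSumAbove x w fu = x fu w
  hsum1 : x fu w + x gl w = 1
  honly : ∀ i, 0 < x i w → i = fu ∨ i = gl
  hT : ∑ i, x i w = 1

section Struct
variable (hx : M.StronglyStable x)
include hx

lemma firm_struct {f : F} {w0 : W} (h0 : (f, w0) ∈ Phi x) : ∃ m b, FirmII M x f m b := by
  classical
  obtain ⟨hcard2, pm, hpmPhi, hpm1, hpmf⟩ := (ml_count hx).2.1 (f, w0) h0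
  obtain ⟨a, b', hab, hset⟩ := Finset.card_eq_two.1 hcard2
  have hpmfib : pm ∈ (Phi x).filter (fun p' => p'.1 = f) := mem_filter.2 ⟨hpmPhi, hpm1⟩
  -- the other element of the fiber
  have hother : ∃ pb ∈ (Phi x).filter (fun p' => p'.1 = f), pb ≠ pm := by
    rw [hset] at hpmfib ⊢
    rcases Finset.mem_insert.1 hpmfib with h | h
    · exact ⟨b', by simp, by rw [h]; exact fun e => hab e.symm⟩
    · have h' : pm = b' := Finset.mem_singleton.1 h
      exact ⟨a, by simp, by rw [h']; exact hab⟩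
  obtain ⟨pb, hpbfib, hpbne⟩ := hother
  have hpbPhi : pb ∈ Phi x := (mem_filter.1 hpbfib).1
  have hpb1 : pb.1 = f := (mem_filter.1 hpbfib).2
  -- pb is not pf, hence pw
  have hpbnpf : ¬ pf M x pb := by
    intro hc
    exact hpbne (pf_inj hx hpbPhi hpmPhi hc hpmf (hpb1.trans hpm1.symm))
  have hpbpw : pw M x pb := (Phi_cover hx hpbPhi).resolve_left hpbnpf
  have hpmnpw : ¬ pw M x pm := fun hc => (ml_count hx).1 pm hpmPhi ⟨hpmf, hc⟩
  set m := pm.2 with hm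
  set b := pb.2 with hbdef
  have hpmeq : pm = (f, m) := Prod.ext hpm1 rfl
  have hpbeq : pb = (f, b) := Prod.ext hpb1 rfl
  have hmb : m ≠ b := by
    intro e
    exact hpbne (by rw [hpbeq, hpmeq, e])
  rw [hpmeq] at hpmPhi hpmf hpmnpw
  rw [hpbeq] at hpbPhi hpbpw
  have hpfm : M.rowSumAbove x f m = (M.q f : ℝ) := hpmf
  have horder : M.prefF f b m := by
    rcases M.prefF_total f m b hmb with h | h
    · exact absurd ((Rq_full hx hpfm).2 b h) (ne_of_gt (mem_Phi.1 hpbPhi).1)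
    · exact h
  have hfib : ∀ j : W, (f, j) ∈ Phi x → j = m ∨ j = b := by
    intro j hj
    have : (f, j) ∈ (Phi x).filter (fun p' => p'.1 = f) := mem_filter.2 ⟨hj, rfl⟩
    rw [hset] at this hpmfib hpbfib
    rcases Finset.mem_insert.1 this with h | h
    · -- (f,j) = a; pm, pb are a or b' and distinct; whichever equals a
      rcases Finset.mem_insert.1 hpmfib with hm' | hm'
      · left; rw [hpmeq] at hm'; exact congrArg Prod.snd (h.trans hm'.symm)
      · rcases Finset.mem_insert.1 hpbfib with hb' | hb'
        · right; rw [hpbeq] at hb'; exact congrArg Prod.snd (h.trans hb'.symm)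
        · exfalso
          exact hpbne ((Finset.mem_singleton.1 hb').trans (Finset.mem_singleton.1 hm').symm)
    · have hj' : (f, j) = b' := Finset.mem_singleton.1 h
      rcases Finset.mem_insert.1 hpmfib with hm' | hm'
      · rcases Finset.mem_insert.1 hpbfib with hb' | hb'
        · exfalso; exact hpbne (hb'.trans hm'.symm)
        · right; rw [hpbeq] at hb'
          exact congrArg Prod.snd (hj'.trans (Finset.mem_singleton.1 hb').symm)
      · left; rw [hpmeq] at hm'
        exact congrArg Prod.snd (hj'.trans (Finset.mem_singleton.1 hm').symm)
  have hothers : ∀ j, 0 < x f j → j ≠ m → j ≠ b → x f j = 1 := by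
    intro j hj hjm hjb
    rcases frac_or_int hx (f := f) (j := j) (fun hc => by
      rcases hfib j hc with h | h
      · exact hjm h
      · exact hjb h) with h | h
    · exact absurd h (ne_of_gt hj)
    · exact h
  have hS : ∑ j, x f j = (M.q f : ℝ) := (Rq_full hx hpfm).1
  -- sum decomposition
  have hbmem : b ∈ univ.erase m := Finset.mem_erase.2 ⟨(fun e => hmb e.symm), mem_univ b⟩
  have hsplit1 : x f m + ∑ j ∈ univ.erase m, x f j = ∑ j, x f j :=
    Finset.add_sum_erase univ (fun j => x f j) (mem_univ m)
  have hsplit2 : x f b + ∑ j ∈ (univ.erase m).erase b, x f j = ∑ j ∈ univ.erase m, x f j :=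
    Finset.add_sum_erase _ (fun j => x f j) hbmem
  have hzo : ∀ j ∈ (univ.erase m).erase b, x f j = 0 ∨ x f j = 1 := by
    intro j hj
    have hjb : j ≠ b := (Finset.mem_erase.1 hj).1
    have hjm : j ≠ m := (Finset.mem_erase.1 (Finset.mem_of_mem_erase hj)).1
    rcases le_or_gt (x f j) 0 with h | h
    · exact Or.inl (le_antisymm h (xnn hx f j))
    · exact Or.inr (hothers j h hjm hjb)
  have hrest := sum_zero_one (x := x) hzo
  have hIeq : ((univ.erase m).erase b).filter (fun j => x f j = 1) = Ints x f := by
    ext j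
    unfold Ints
    simp only [mem_filter, Finset.mem_erase, mem_univ, true_and, and_true]
    constructor
    · rintro ⟨-, h⟩; exact h
    · intro h
      refine ⟨⟨?_, ?_⟩, h⟩
      · intro e; rw [e] at h; exact (ne_of_lt (mem_Phi.1 hpbPhi).2) h
      · intro e; rw [e] at h; exact (ne_of_lt (mem_Phi.1 hpmPhi).2) h
  rw [hIeq] at hrest
  set n := (Ints x f).card with hn
  have hsum : x f m + x f b + (n : ℝ) = (M.q f : ℝ) := by
    rw [hrest] at hsplit2; linarith
  have hfm := mem_Phi.1 hpmPhi
  have hfb := mem_Phi.1 hpbPhi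
  have h1 : (n : ℝ) < (M.q f : ℝ) := by linarith [hfm.1, hfb.1]
  have h2 : (M.q f : ℝ) < (n : ℝ) + 2 := by linarith [hfm.2, hfb.2]
  have h1' : n < M.q f := by exact_mod_cast h1
  have h2' : M.q f < n + 2 := by exact_mod_cast h2
  have hqc : M.q f = n + 1 := by omega
  have hsum1 : x f m + x f b = 1 := by
    have : (M.q f : ℝ) = (n : ℝ) + 1 := by exact_mod_cast hqc
    linarith
  exact ⟨m, b, hpmPhi, hpbPhi, horder, hpfm, hpmnpw, hpbpw, hsum1, hqc, hothers, hS⟩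

lemma worker_struct {f0 : F} {w : W} (h0 : (f0, w) ∈ Phi x) : ∃ fu gl, WorkerII M x w fu gl := by
  classical
  obtain ⟨hcard2, pg, hpgPhi, hpg2, hpgpw⟩ := (ml_count hx).2.2 (f0, w) h0
  obtain ⟨a, b', hab, hset⟩ := Finset.card_eq_two.1 hcard2
  have hpgfib : pg ∈ (Phi x).filter (fun p' => p'.2 = w) := mem_filter.2 ⟨hpgPhi, hpg2⟩
  have hother : ∃ pu ∈ (Phi x).filter (fun p' => p'.2 = w), pu ≠ pg := by
    rw [hset] at hpgfib ⊢
    rcases Finset.mem_insert.1 hpgfib with h | h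
    · exact ⟨b', by simp, by rw [h]; exact fun e => hab e.symm⟩
    · have h' : pg = b' := Finset.mem_singleton.1 h
      exact ⟨a, by simp, by rw [h']; exact hab⟩
  obtain ⟨pu, hpufib, hpune⟩ := hother
  have hpuPhi : pu ∈ Phi x := (mem_filter.1 hpufib).1
  have hpu2 : pu.2 = w := (mem_filter.1 hpufib).2
  have hpunpw : ¬ pw M x pu := by
    intro hc
    exact hpune (pw_inj hx hpuPhi hpgPhi hc hpgpw (hpu2.trans hpg2.symm))
  set gl := pg.1 with hgl
  set fu := pu.1 with hfu
  have hpgeq : pg = (gl, w) := Prod.ext rfl hpg2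
  have hpueq : pu = (fu, w) := Prod.ext rfl hpu2
  have hfg : fu ≠ gl := by
    intro e
    exact hpune (by rw [hpueq, hpgeq, e])
  rw [hpgeq] at hpgPhi hpgpw
  rw [hpueq] at hpuPhi hpunpw
  have hCgl : M.colSumAbove x w gl = 1 := hpgpw
  have horder : M.prefW w fu gl := by
    rcases M.prefW_total w fu gl hfg with h | h
    · exact h
    · exact absurd ((C1_full hx hCgl).2 fu h) (ne_of_gt (mem_Phi.1 hpuPhi).1)
  have hT : ∑ i, x i w = 1 := (C1_full hx hCgl).1
  have hfib : ∀ i : F, (i, w) ∈ Phi x → i = gl ∨ i = fu := by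
    intro i hi
    have : (i, w) ∈ (Phi x).filter (fun p' => p'.2 = w) := mem_filter.2 ⟨hi, rfl⟩
    rw [hset] at this hpgfib hpufib
    rcases Finset.mem_insert.1 this with h | h
    · rcases Finset.mem_insert.1 hpgfib with hg' | hg'
      · left; rw [hpgeq] at hg'; exact congrArg Prod.fst (h.trans hg'.symm)
      · rcases Finset.mem_insert.1 hpufib with hu' | hu'
        · right; rw [hpueq] at hu'; exact congrArg Prod.fst (h.trans hu'.symm)
        · exfalso
          exact hpune ((Finset.mem_singleton.1 hu').trans (Finset.mem_singleton.1 hg').symm)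
    · have hj' : (i, w) = b' := Finset.mem_singleton.1 h
      rcases Finset.mem_insert.1 hpgfib with hg' | hg'
      · rcases Finset.mem_insert.1 hpufib with hu' | hu'
        · exfalso; exact hpune (hu'.trans hg'.symm)
        · right; rw [hpueq] at hu'
          exact congrArg Prod.fst (hj'.trans (Finset.mem_singleton.1 hu').symm)
      · left; rw [hpgeq] at hg'
        exact congrArg Prod.fst (hj'.trans (Finset.mem_singleton.1 hg').symm)
  have honly : ∀ i, 0 < x i w → i = fu ∨ i = gl := by
    intro i hi
    by_cases hif : i = fu
    · exact Or.inl hif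
    by_cases hig : i = gl
    · exact Or.inr hig
    -- x i w is 0 or 1; both impossible
    exfalso
    have hnfrac : (i, w) ∉ Phi x := by
      intro hc
      rcases hfib i hc with h | h
      · exact hig h
      · exact hif h
    rcases frac_or_int hx hnfrac with h | h
    · exact (ne_of_gt hi) h
    · -- x i w = 1 makes T > 1
      have hgt : (1 : ℝ) < ∑ i', x i' w := by
        have hmem : i ∈ univ.erase fu := Finset.mem_erase.2 ⟨hif, mem_univ i⟩
        have h1 : x fu w + ∑ i' ∈ univ.erase fu, x i' w = ∑ i', x i' w :=
          Finset.add_sum_erase univ (fun i' => x i' w) (mem_univ fu)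
        have h2 : x i w ≤ ∑ i' ∈ univ.erase fu, x i' w :=
          Finset.single_le_sum (fun i' _ => xnn hx i' w) hmem
        have := (mem_Phi.1 hpuPhi).1
        linarith
      rw [hT] at hgt
      exact lt_irrefl 1 hgt
  have hsum1 : x fu w + x gl w = 1 := by
    have hglmem : gl ∈ univ.erase fu := Finset.mem_erase.2 ⟨fun e => hfg e.symm, mem_univ gl⟩
    have h1 : x fu w + ∑ i ∈ univ.erase fu, x i w = ∑ i, x i w :=
      Finset.add_sum_erase univ (fun i => x i w) (mem_univ fu)
    have h2 : x gl w + ∑ i ∈ (univ.erase fu).erase gl, x i w = ∑ i ∈ univ.erase fu, x i w :=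
      Finset.add_sum_erase _ (fun i => x i w) hglmem
    have h3 : ∑ i ∈ (univ.erase fu).erase gl, x i w = 0 := by
      apply Finset.sum_eq_zero
      intro i hi
      have hig : i ≠ gl := (Finset.mem_erase.1 hi).1
      have hif : i ≠ fu := (Finset.mem_erase.1 (Finset.mem_of_mem_erase hi)).1
      rcases le_or_gt (x i w) 0 with h | h
      · exact le_antisymm h (xnn hx i w)
      · rcases honly i h with h' | h'
        · exact absurd h' hif
        · exact absurd h' hig
    rw [hT] at h1
    rw [h3] at h2
    linarith
  have hCfux : M.colSumAbove x w fu = x fu w := by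
    unfold Market.colSumAbove
    apply Finset.sum_eq_single_of_mem
    · exact mem_filter.2 ⟨mem_univ fu, weakW_refl M w fu⟩
    · intro i hi hine
      rcases le_or_gt (x i w) 0 with h | h
      · exact le_antisymm h (xnn hx i w)
      · rcases honly i h with h' | h'
        · exact absurd h' hine
        · exfalso
          rw [h'] at hi
          exact not_weakW_of_pref M horder (mem_filter.1 hi).2
  exact ⟨fu, gl, hpuPhi, hpgPhi, horder, hCgl, hCfux, hsum1, honly, hT⟩

end Struct
variable (M x) in
/-- Breakpoints: the values of the column-tight fractional pairs, plus 1. -/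
noncomputable def thr : Finset ℝ :=
  insert 1 (((Phi x).filter (fun p => M.colSumAbove x p.2 p.1 = 1)).image
    (fun p => x p.1 p.2))

variable (M x) in
noncomputable def nthr : ℕ := (thr M x).card

variable (M x) in
noncomputable def tfun : Fin (nthr M x) → ℝ :=
  fun l => ((thr M x).orderIsoOfFin rfl l : ℝ)

lemma tfun_mem (l : Fin (nthr M x)) : tfun M x l ∈ thr M x :=
  ((thr M x).orderIsoOfFin rfl l).2

lemma tfun_lt {l l' : Fin (nthr M x)} (h : l < l') : tfun M x l < tfun M x l' :=
  Subtype.coe_lt_coe.2 (((thr M x).orderIsoOfFin rfl).lt_iff_lt.2 h)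

lemma tfun_le_iff {l l' : Fin (nthr M x)} : tfun M x l ≤ tfun M x l' ↔ l ≤ l' := by
  constructor
  · intro h
    exact ((thr M x).orderIsoOfFin rfl).le_iff_le.1 (Subtype.coe_le_coe.1 h)
  · intro h
    exact Subtype.coe_le_coe.2 (((thr M x).orderIsoOfFin rfl).le_iff_le.2 h)

lemma tfun_surj {θ : ℝ} (h : θ ∈ thr M x) : ∃ l, tfun M x l = θ := by
  refine ⟨((thr M x).orderIsoOfFin rfl).symm ⟨θ, h⟩, ?_⟩
  unfold tfun
  rw [OrderIso.apply_symm_apply]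

lemma thr_mem_pos {θ : ℝ} (h : θ ∈ thr M x) : 0 < θ ∧ θ ≤ 1 := by
  unfold thr at h
  rcases Finset.mem_insert.1 h with h | h
  · rw [h]; norm_num
  · obtain ⟨p, hp, he⟩ := Finset.mem_image.1 h
    have := mem_Phi.1 (Finset.mem_filter.1 hp).1
    rw [← he]
    exact ⟨this.1, le_of_lt this.2⟩

lemma one_mem_thr : (1 : ℝ) ∈ thr M x := Finset.mem_insert_self 1 _

lemma nthr_pos : 0 < nthr M x :=
  Finset.card_pos.2 ⟨1, one_mem_thr⟩

variable (M x) in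
noncomputable def vfun : ℕ → ℝ :=
  fun n => if h : 0 < n ∧ n ≤ nthr M x then tfun M x ⟨n - 1, by omega⟩ else 0

variable (M x) in
noncomputable def alphafun : Fin (nthr M x) → ℝ :=
  fun l => vfun M x (l.1 + 1) - vfun M x l.1

lemma vfun_zero : vfun M x 0 = 0 := by
  simp [vfun]

lemma vfun_succ (l : Fin (nthr M x)) : vfun M x (l.1 + 1) = tfun M x l := by
  have he : (⟨l.1 + 1 - 1, by omega⟩ : Fin (nthr M x)) = l := Fin.ext (by simp)
  unfold vfun
  rw [dif_pos ⟨Nat.succ_pos _, l.2⟩, he]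

lemma vfun_lower (l : Fin (nthr M x)) (h : 0 < l.1) :
    vfun M x l.1 = tfun M x ⟨l.1 - 1, by omega⟩ := by
  unfold vfun
  rw [dif_pos ⟨h, le_of_lt l.2⟩]

lemma tfun_last : tfun M x ⟨nthr M x - 1, by have := nthr_pos (M := M) (x := x); omega⟩ = 1 := by
  obtain ⟨l, hl⟩ := tfun_surj (one_mem_thr (M := M) (x := x))
  have hle : tfun M x l ≤ tfun M x ⟨nthr M x - 1, by have := nthr_pos (M := M) (x := x); omega⟩ := by
    rw [tfun_le_iff]
    have h2 := l.2
    exact Fin.le_def.2 (by simp only [Fin.val_mk]; omega)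
  have := (thr_mem_pos (tfun_mem (M := M) (x := x) ⟨nthr M x - 1, by
    have := nthr_pos (M := M) (x := x); omega⟩)).2
  rw [hl] at hle
  linarith

lemma alphafun_pos (l : Fin (nthr M x)) : 0 < alphafun M x l := by
  unfold alphafun
  rcases Nat.eq_zero_or_pos l.1 with h0 | h0
  · rw [h0, vfun_zero]
    have h1 : vfun M x (l.1 + 1) = tfun M x l := vfun_succ l
    rw [h0] at h1
    rw [h1]
    simpa using (thr_mem_pos (tfun_mem (M := M) (x := x) l)).1
  · rw [vfun_succ l, vfun_lower l h0]
    have : (⟨l.1 - 1, by omega⟩ : Fin (nthr M x)) < l := by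
      rw [Fin.lt_def]; simp; omega
    linarith [tfun_lt (M := M) (x := x) this]

lemma sum_alphafun : ∑ l, alphafun M x l = 1 := by
  unfold alphafun
  have h1 : ∑ l : Fin (nthr M x), (vfun M x (l.1 + 1) - vfun M x l.1)
      = ∑ n ∈ Finset.range (nthr M x), (vfun M x (n + 1) - vfun M x n) :=
    Fin.sum_univ_eq_sum_range (fun n => vfun M x (n + 1) - vfun M x n) (nthr M x)
  rw [h1, Finset.sum_range_sub (vfun M x), vfun_zero]
  have hK := nthr_pos (M := M) (x := x)
  have h2 : vfun M x (nthr M x) = 1 := by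
    have : nthr M x = (nthr M x - 1) + 1 := by omega
    rw [this]
    have := vfun_succ (M := M) (x := x) ⟨nthr M x - 1, by omega⟩
    rw [this]
    exact tfun_last
  rw [h2]
  ring

lemma sum_alphafun_le {θ : ℝ} (hθ : θ ∈ thr M x) :
    ∑ l ∈ univ.filter (fun l => tfun M x l ≤ θ), alphafun M x l = θ := by
  obtain ⟨L, hL⟩ := tfun_surj hθ
  have hcond : ∀ l : Fin (nthr M x), (tfun M x l ≤ θ) ↔ l.1 ≤ L.1 := by
    intro l
    rw [← hL, tfun_le_iff]
    exact ⟨fun h => Fin.le_def.1 h, fun h => Fin.le_def.2 h⟩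
  have h1 : ∑ l ∈ univ.filter (fun l => tfun M x l ≤ θ), alphafun M x l
      = ∑ l : Fin (nthr M x), (if l.1 ≤ L.1 then vfun M x (l.1 + 1) - vfun M x l.1 else 0) := by
    rw [Finset.sum_filter]
    refine Finset.sum_congr rfl (fun l _ => ?_)
    by_cases h : tfun M x l ≤ θ
    · rw [if_pos h, if_pos ((hcond l).1 h)]; rfl
    · rw [if_neg h, if_neg (fun hc => h ((hcond l).2 hc))]
  rw [h1]
  have h2 : ∑ l : Fin (nthr M x), (if l.1 ≤ L.1 then vfun M x (l.1 + 1) - vfun M x l.1 else 0)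
      = ∑ n ∈ Finset.range (nthr M x), (if n ≤ L.1 then vfun M x (n + 1) - vfun M x n else 0) :=
    Fin.sum_univ_eq_sum_range (fun n => if n ≤ L.1 then vfun M x (n + 1) - vfun M x n else 0)
      (nthr M x)
  rw [h2]
  have h3 : (Finset.range (nthr M x)).filter (fun n => n ≤ L.1) = Finset.range (L.1 + 1) := by
    ext n
    simp only [Finset.mem_filter, Finset.mem_range, Nat.lt_succ_iff]
    have := L.2
    omega
  rw [← Finset.sum_filter, h3, Finset.sum_range_sub (vfun M x), vfun_zero]
  have h4 := vfun_succ (M := M) (x := x) L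
  rw [h4, hL]
  ring

lemma sum_alphafun_gt {θ : ℝ} (hθ : θ ∈ thr M x) :
    ∑ l ∈ univ.filter (fun l => ¬ tfun M x l ≤ θ), alphafun M x l = 1 - θ := by
  have := Finset.sum_filter_add_sum_filter_not univ (fun l => tfun M x l ≤ θ) (alphafun M x)
  rw [sum_alphafun_le hθ] at this
  rw [sum_alphafun] at this
  linarith

variable (M x) in
/-- The stable matching at level `l`. -/
noncomputable def mu (l : Fin (nthr M x)) (f : F) : Finset W :=
  univ.filter (fun w =>
    x f w = 1 ∨
    (0 < x f w ∧ x f w < 1 ∧ M.colSumAbove x w f = 1 ∧ tfun M x l ≤ x f w) ∨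
    (0 < x f w ∧ x f w < 1 ∧ M.colSumAbove x w f ≠ 1 ∧ 1 - x f w < tfun M x l))

lemma mem_mu {l : Fin (nthr M x)} {f : F} {w : W} :
    w ∈ mu M x l f ↔
    (x f w = 1 ∨
    (0 < x f w ∧ x f w < 1 ∧ M.colSumAbove x w f = 1 ∧ tfun M x l ≤ x f w) ∨
    (0 < x f w ∧ x f w < 1 ∧ M.colSumAbove x w f ≠ 1 ∧ 1 - x f w < tfun M x l)) := by
  unfold mu
  rw [Finset.mem_filter]
  simp

lemma mem_mu_pos {l : Fin (nthr M x)} {f : F} {w : W} (h : w ∈ mu M x l f) : 0 < x f w := by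
  rcases mem_mu.1 h with h | h | h
  · rw [h]; norm_num
  · exact h.1
  · exact h.1
section Verify
variable (hx : M.StronglyStable x)
include hx

omit hx in
lemma mem_mu_glow {l : Fin (nthr M x)} {w : W} {fu gl : F} (hW : WorkerII M x w fu gl) :
    w ∈ mu M x l gl ↔ tfun M x l ≤ x gl w := by
  have hfr := mem_Phi.1 hW.hgl
  rw [mem_mu]
  constructor
  · rintro (h | h | h)
    · exact absurd h (ne_of_lt hfr.2)
    · exact h.2.2.2
    · exact absurd hW.hCgl h.2.2.1
  · intro h
    exact Or.inr (Or.inl ⟨hfr.1, hfr.2, hW.hCgl, h⟩)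

omit hx in
lemma mem_mu_fup {l : Fin (nthr M x)} {w : W} {fu gl : F} (hW : WorkerII M x w fu gl) :
    w ∈ mu M x l fu ↔ x gl w < tfun M x l := by
  have hfr := mem_Phi.1 hW.hfu
  have hCne : M.colSumAbove x w fu ≠ 1 := by
    rw [hW.hCfux]; exact ne_of_lt hfr.2
  have he : 1 - x fu w = x gl w := by linarith [hW.hsum1]
  rw [mem_mu]
  constructor
  · rintro (h | h | h)
    · exact absurd h (ne_of_lt hfr.2)
    · exact absurd h.2.2.1 hCne
    · rw [← he]; exact h.2.2.2
  · intro h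
    exact Or.inr (Or.inr ⟨hfr.1, hfr.2, hCne, by rw [he]; exact h⟩)

lemma worker_cases (w : W) :
    (∀ i, x i w = 0) ∨ (∃ g, x g w = 1 ∧ ∀ i, i ≠ g → x i w = 0) ∨
      (∃ fu gl, WorkerII M x w fu gl) := by
  classical
  by_cases hfrac : ∃ i, (i, w) ∈ Phi x
  · obtain ⟨i, hi⟩ := hfrac
    exact Or.inr (Or.inr (worker_struct hx hi))
  · push_neg at hfrac
    by_cases hone : ∃ g, x g w = 1
    · obtain ⟨g, hg⟩ := hone
      refine Or.inr (Or.inl ⟨g, hg, fun i hig => ?_⟩)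
      by_contra hne
      have hpos : 0 < x i w := lt_of_le_of_ne (xnn hx i w) (Ne.symm hne)
      have h2 : x g w + x i w ≤ ∑ i', x i' w := by
        have himem : i ∈ univ.erase g := Finset.mem_erase.2 ⟨hig, mem_univ i⟩
        have ha : x g w + ∑ i' ∈ univ.erase g, x i' w = ∑ i', x i' w :=
          Finset.add_sum_erase univ (fun i' => x i' w) (mem_univ g)
        have hb : x i w ≤ ∑ i' ∈ univ.erase g, x i' w :=
          Finset.single_le_sum (fun i' _ => xnn hx i' w) himem
        linarith
      have := colsum_le_one hx w
      rw [hg] at h2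
      linarith
    · push_neg at hone
      refine Or.inl (fun i => ?_)
      rcases frac_or_int hx (hfrac i) with h | h
      · exact h
      · exact absurd h (hone i)

lemma worker_in_mu (l : Fin (nthr M x)) (w : W) :
    (∀ i, x i w = 0) ∨ ∃ g, w ∈ mu M x l g := by
  rcases worker_cases hx w with h | ⟨g, hg, _⟩ | ⟨fu, gl, hW⟩
  · exact Or.inl h
  · exact Or.inr ⟨g, mem_mu.2 (Or.inl hg)⟩
  · rcases le_or_gt (tfun M x l) (x gl w) with h | h
    · exact Or.inr ⟨gl, (mem_mu_glow hW).2 h⟩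
    · exact Or.inr ⟨fu, (mem_mu_fup hW).2 h⟩

lemma mu_unique (l : Fin (nthr M x)) {w : W} {f f' : F}
    (h : w ∈ mu M x l f) (h' : w ∈ mu M x l f') : f = f' := by
  have hp := mem_mu_pos h
  have hp' := mem_mu_pos h'
  rcases worker_cases hx w with hz | ⟨g, hg, ho⟩ | ⟨fu, gl, hW⟩
  · exact absurd (hz f) (ne_of_gt hp)
  · have h1 : f = g := by
      by_contra hc; exact (ne_of_gt hp) (ho f hc)
    have h2 : f' = g := by
      by_contra hc; exact (ne_of_gt hp') (ho f' hc)
    rw [h1, h2]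
  · have h1 : f = fu ∨ f = gl := hW.honly f hp
    have h2 : f' = fu ∨ f' = gl := hW.honly f' hp'
    rcases h1 with h1 | h1 <;> rcases h2 with h2 | h2 <;> try (rw [h1, h2])
    · rw [h1] at h; rw [h2] at h'
      have ha := (mem_mu_fup hW).1 h
      have hb := (mem_mu_glow hW).1 h'
      linarith
    · rw [h1] at h; rw [h2] at h'
      have ha := (mem_mu_glow hW).1 h
      have hb := (mem_mu_fup hW).1 h'
      linarith

lemma mu_fiber_empty {f : F} (hem : ∀ j, (f, j) ∉ Phi x) (l : Fin (nthr M x)) :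
    mu M x l f = Ints x f := by
  ext j
  rw [mem_mu]
  unfold Ints
  rw [mem_filter]
  constructor
  · rintro (h | h | h)
    · exact ⟨mem_univ j, h⟩
    · exact absurd (mem_Phi.2 ⟨h.1, h.2.1⟩) (hem j)
    · exact absurd (mem_Phi.2 ⟨h.1, h.2.1⟩) (hem j)
  · rintro ⟨-, h⟩
    exact Or.inl h

lemma Ints_sum_eq {f : F} (hem : ∀ j, (f, j) ∉ Phi x) :
    ∑ j, x f j = ((Ints x f).card : ℝ) := by
  have h := sum_zero_one (x := x) (s := univ) (f := f) (fun j _ => frac_or_int hx (hem j))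
  rw [h]
  rfl


lemma mu_firmII {f : F} {m b : W} (hF : FirmII M x f m b) (l : Fin (nthr M x)) :
    mu M x l f = insert (if tfun M x l ≤ x f b then b else m) (Ints x f) := by
  classical
  have hfm := mem_Phi.1 hF.hm
  have hfb := mem_Phi.1 hF.hb
  have hsub : 1 - x f m = x f b := by linarith [hF.hsum1]
  ext j
  rw [mem_mu, Finset.mem_insert]
  unfold Ints
  rw [mem_filter]
  constructor
  · rintro (h | h | h)
    · exact Or.inr ⟨mem_univ j, h⟩
    · -- column-tight fractional clause: j = b
      have hjmb : j = m ∨ j = b := by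
        by_contra hc
        push_neg at hc
        exact (ne_of_lt h.2.1) (hF.hothers j h.1 hc.1 hc.2)
      rcases hjmb with he | he
      · rw [he] at h; exact absurd h.2.2.1 hF.hCm
      · left
        rw [he] at h ⊢
        rw [if_pos h.2.2.2]
    · -- row-tight fractional clause: j = m
      have hjmb : j = m ∨ j = b := by
        by_contra hc
        push_neg at hc
        exact (ne_of_lt h.2.1) (hF.hothers j h.1 hc.1 hc.2)
      rcases hjmb with he | he
      · left
        rw [he] at h ⊢
        rw [hsub] at h
        rw [if_neg (not_le.2 h.2.2.2)]
      · rw [he] at h; exact absurd hF.hCb h.2.2.1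
  · rintro (h | ⟨-, h⟩)
    · by_cases hc : tfun M x l ≤ x f b
      · rw [if_pos hc] at h
        rw [h]
        exact Or.inr (Or.inl ⟨hfb.1, hfb.2, hF.hCb, hc⟩)
      · rw [if_neg hc] at h
        rw [h]
        refine Or.inr (Or.inr ⟨hfm.1, hfm.2, hF.hCm, ?_⟩)
        rw [hsub]
        exact not_le.1 hc
    · exact Or.inl h

lemma mu_card_le (f : F) (l : Fin (nthr M x)) : (mu M x l f).card ≤ M.q f := by
  classical
  by_cases hfrac : ∃ j, (f, j) ∈ Phi x
  · obtain ⟨j0, hj0⟩ := hfrac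
    obtain ⟨m, b, hF⟩ := firm_struct hx hj0
    have hmu : mu M x l f = insert (if tfun M x l ≤ x f b then b else m) (Ints x f) :=
      mu_firmII hx hF l
    rw [hmu]
    have hnotmem : (if tfun M x l ≤ x f b then b else m) ∉ Ints x f := by
      unfold Ints
      rw [mem_filter]
      rintro ⟨-, h1⟩
      by_cases hc : tfun M x l ≤ x f b
      · rw [if_pos hc] at h1; exact (ne_of_lt (mem_Phi.1 hF.hb).2) h1
      · rw [if_neg hc] at h1; exact (ne_of_lt (mem_Phi.1 hF.hm).2) h1
    rw [Finset.card_insert_of_notMem hnotmem]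
    have := hF.hqc
    omega
  · push_neg at hfrac
    rw [mu_fiber_empty hx hfrac l]
    have h1 := Ints_sum_eq hx hfrac
    have h2 := rowsum_le_q hx f
    rw [h1] at h2
    exact_mod_cast h2

lemma mu_card_full {f : F} (hS : ∑ j, x f j = (M.q f : ℝ)) (l : Fin (nthr M x)) :
    (mu M x l f).card = M.q f := by
  classical
  by_cases hfrac : ∃ j, (f, j) ∈ Phi x
  · obtain ⟨j0, hj0⟩ := hfrac
    obtain ⟨m, b, hF⟩ := firm_struct hx hj0
    rw [mu_firmII hx hF l]
    have hnotmem : (if tfun M x l ≤ x f b then b else m) ∉ Ints x f := by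
      unfold Ints
      rw [mem_filter]
      rintro ⟨-, h1⟩
      by_cases hc : tfun M x l ≤ x f b
      · rw [if_pos hc] at h1; exact (ne_of_lt (mem_Phi.1 hF.hb).2) h1
      · rw [if_neg hc] at h1; exact (ne_of_lt (mem_Phi.1 hF.hm).2) h1
    rw [Finset.card_insert_of_notMem hnotmem]
    have := hF.hqc
    omega
  · push_neg at hfrac
    rw [mu_fiber_empty hx hfrac l]
    have h1 := Ints_sum_eq hx hfrac
    rw [hS] at h1
    exact_mod_cast h1.symm

end Verify
section Verify2
variable (hx : M.StronglyStable x)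
include hx

lemma colAbove_lt_one_of_worse {w : W} {f g : F} (hp : M.prefW w f g) (hxg : 0 < x g w) :
    M.colSumAbove x w f < 1 := by
  have hnotin : g ∉ univ.filter (fun i => M.weakW w i f) := by
    rw [mem_filter]
    rintro ⟨-, hw⟩
    exact not_weakW_of_pref M hp hw
  have hins : ∑ i ∈ insert g (univ.filter (fun i => M.weakW w i f)), x i w
      = x g w + M.colSumAbove x w f := Finset.sum_insert hnotin
  have hsub : ∑ i ∈ insert g (univ.filter (fun i => M.weakW w i f)), x i w ≤ ∑ i, x i w :=
    Finset.sum_le_sum_of_subset_of_nonneg (Finset.subset_univ _)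
      (fun i _ _ => xnn hx i w)
  have := colsum_le_one hx w
  linarith

lemma mu_no_block (l : Fin (nthr M x)) (f : F) (w : W) : ¬ M.blocks (mu M x l) f w := by
  rintro ⟨hnm, hacc, hpref, hroom⟩
  have hClt : M.colSumAbove x w f < 1 := by
    rcases worker_in_mu hx l w with hz | ⟨g, hg⟩
    · have h0 : M.colSumAbove x w f = 0 :=
        Finset.sum_eq_zero (fun i _ => hz i)
      rw [h0]; norm_num
    · have hgf : g ≠ f := by
        intro e; rw [e] at hg; exact hnm hg
      exact colAbove_lt_one_of_worse hx (hpref g hg) (mem_mu_pos hg)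
  have hR : M.rowSumAbove x f w = (M.q f : ℝ) :=
    (strongAlt hx hacc).resolve_right (ne_of_lt hClt)
  obtain ⟨hS, hlow⟩ := Rq_full hx hR
  rcases hroom with hlt | ⟨w', hw', hpf⟩
  · rw [mu_card_full hx hS l] at hlt
    exact lt_irrefl _ hlt
  · exact absurd (hlow w' hpf) (ne_of_gt (mem_mu_pos hw'))

lemma mu_stable (l : Fin (nthr M x)) : M.isStable (mu M x l) := by
  refine ⟨⟨fun f => mu_card_le hx f l, fun w f f' h h' => mu_unique hx l h h'⟩,
    fun f w h => acc_of_pos hx (mem_mu_pos h), fun f w => mu_no_block hx l f w⟩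

lemma mu_decomp (f : F) (w : W) :
    x f w = ∑ l, alphafun M x l * M.incidence (mu M x l) f w := by
  classical
  have hform : ∑ l, alphafun M x l * M.incidence (mu M x l) f w
      = ∑ l ∈ univ.filter (fun l => w ∈ mu M x l f), alphafun M x l := by
    rw [Finset.sum_filter]
    refine Finset.sum_congr rfl (fun l _ => ?_)
    unfold Market.incidence
    by_cases h : w ∈ mu M x l f
    · rw [if_pos h, if_pos h, mul_one]
    · rw [if_neg h, if_neg h, mul_zero]
  rw [hform]
  rcases le_or_gt (x f w) 0 with h0 | h0
  · have hz : x f w = 0 := le_antisymm h0 (xnn hx f w)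
    have : univ.filter (fun l => w ∈ mu M x l f) = ∅ := by
      apply Finset.filter_false_of_mem
      intro l _ hc
      exact (ne_of_gt (mem_mu_pos hc)) hz
    rw [this, Finset.sum_empty, hz]
  rcases lt_or_eq_of_le (xle1 hx f w) with h1 | h1
  · -- fractional
    have hfr : (f, w) ∈ Phi x := mem_Phi.2 ⟨h0, h1⟩
    by_cases hC : M.colSumAbove x w f = 1
    · have hmem : ∀ l : Fin (nthr M x), w ∈ mu M x l f ↔ tfun M x l ≤ x f w := by
        intro l
        rw [mem_mu]
        constructor
        · rintro (h | h | h)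
          · exact absurd h (ne_of_lt h1)
          · exact h.2.2.2
          · exact absurd hC h.2.2.1
        · intro h
          exact Or.inr (Or.inl ⟨h0, h1, hC, h⟩)
      have hthr : x f w ∈ thr M x := by
        unfold thr
        refine Finset.mem_insert_of_mem (Finset.mem_image.2 ⟨(f, w), ?_, rfl⟩)
        exact mem_filter.2 ⟨hfr, hC⟩
      have := sum_alphafun_le (M := M) (x := x) hthr
      rw [← this]
      apply Finset.sum_congr _ (fun _ _ => rfl)
      ext l
      simp only [mem_filter, mem_univ, true_and]
      exact (hmem l).symm
    · -- row-tight side: f is the upper firm of w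
      obtain ⟨fu, gl, hW⟩ := worker_struct hx hfr
      have hffu : f = fu := by
        rcases hW.honly f h0 with h | h
        · exact h
        · rw [h] at hC; exact absurd hW.hCgl hC
      subst hffu
      have hthr : x gl w ∈ thr M x := by
        unfold thr
        refine Finset.mem_insert_of_mem (Finset.mem_image.2 ⟨(gl, w), ?_, rfl⟩)
        exact mem_filter.2 ⟨hW.hgl, hW.hCgl⟩
      have hmem : ∀ l : Fin (nthr M x), w ∈ mu M x l f ↔ ¬ tfun M x l ≤ x gl w := by
        intro l
        rw [mem_mu_fup hW, ← not_le]
      have := sum_alphafun_gt (M := M) (x := x) hthr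
      have he : 1 - x gl w = x f w := by linarith [hW.hsum1]
      rw [he] at this
      rw [← this]
      apply Finset.sum_congr _ (fun _ _ => rfl)
      ext l
      simp only [mem_filter, mem_univ, true_and]
      exact (hmem l).symm
  · -- x f w = 1
    have : univ.filter (fun l => w ∈ mu M x l f) = univ := by
      apply Finset.filter_true_of_mem
      intro l _
      exact mem_mu.2 (Or.inl h1)
    rw [this, sum_alphafun, h1]

end Verify2
section Dominance

lemma rowAbove_inc (μ : F → Finset W) (f : F) (w : W) :
    M.rowSumAbove (M.incidence μ) f w
      = (((μ f).filter (fun j => M.weakF f j w)).card : ℝ) := by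
  classical
  unfold Market.rowSumAbove Market.incidence
  have hset : (univ.filter (fun j => M.weakF f j w)).filter (fun j => j ∈ μ f)
      = (μ f).filter (fun j => M.weakF f j w) := by
    ext j
    simp only [mem_filter, mem_univ, true_and]
    exact and_comm
  rw [Finset.sum_boole, hset]

variable (hx : M.StronglyStable x)
include hx

lemma mu_dom {l l' : Fin (nthr M x)} (hll' : l ≤ l') (f : F) (w : W) :
    ((mu M x l' f).filter (fun j => M.weakF f j w)).card
      ≤ ((mu M x l f).filter (fun j => M.weakF f j w)).card := by
  classical
  by_cases hfrac : ∃ j, (f, j) ∈ Phi x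
  · obtain ⟨j0, hj0⟩ := hfrac
    obtain ⟨m, b, hF⟩ := firm_struct hx hj0
    rw [mu_firmII hx hF l, mu_firmII hx hF l']
    have hmono : tfun M x l ≤ tfun M x l' := tfun_le_iff.2 hll'
    by_cases hc' : tfun M x l' ≤ x f b
    · rw [if_pos hc', if_pos (le_trans hmono hc')]
    · rw [if_neg hc']
      by_cases hc : tfun M x l ≤ x f b
      · rw [if_pos hc]
        -- l gets b, l' gets m
        rw [Finset.filter_insert, Finset.filter_insert]
        by_cases hmw : M.weakF f m w
        · rw [if_pos hmw, if_pos (weakF_trans_pref M hF.horder hmw)]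
          have hmni : m ∉ (Ints x f).filter (fun j => M.weakF f j w) := by
            rw [mem_filter]
            rintro ⟨hi, -⟩
            unfold Ints at hi
            exact (ne_of_lt (mem_Phi.1 hF.hm).2) (mem_filter.1 hi).2
          have hbni : b ∉ (Ints x f).filter (fun j => M.weakF f j w) := by
            rw [mem_filter]
            rintro ⟨hi, -⟩
            unfold Ints at hi
            exact (ne_of_lt (mem_Phi.1 hF.hb).2) (mem_filter.1 hi).2
          rw [Finset.card_insert_of_notMem hmni, Finset.card_insert_of_notMem hbni]
        · rw [if_neg hmw]
          by_cases hbw : M.weakF f b w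
          · rw [if_pos hbw]
            exact le_trans (Finset.card_le_card (Finset.subset_insert _ _)) (le_refl _)
          · rw [if_neg hbw]
      · rw [if_neg hc]
  · push_neg at hfrac
    rw [mu_fiber_empty hx hfrac l, mu_fiber_empty hx hfrac l']

lemma mu_strict {l l' : Fin (nthr M x)} (h : l < l') :
    ∃ f w, ((mu M x l' f).filter (fun j => M.weakF f j w)).card
      < ((mu M x l f).filter (fun j => M.weakF f j w)).card := by
  classical
  have htl : tfun M x l < tfun M x l' := tfun_lt h
  have htl1 : tfun M x l < 1 :=
    lt_of_lt_of_le htl (thr_mem_pos (tfun_mem (M := M) (x := x) l')).2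
  have hmem := tfun_mem (M := M) (x := x) l
  unfold thr at hmem
  rcases Finset.mem_insert.1 hmem with he | he
  · exact absurd he (ne_of_lt htl1)
  obtain ⟨p, hp, hpe⟩ := Finset.mem_image.1 he
  obtain ⟨hpPhi, hpC⟩ := mem_filter.1 hp
  have hpPhi' : (p.1, p.2) ∈ Phi x := by rw [Prod.mk.eta]; exact hpPhi
  obtain ⟨m, b, hF⟩ := firm_struct hx hpPhi'
  have hfr := mem_Phi.1 hpPhi
  have hpb : p.2 = b := by
    have hmb : p.2 = m ∨ p.2 = b := by
      by_contra hc
      push_neg at hc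
      exact (ne_of_lt hfr.2) (hF.hothers p.2 hfr.1 hc.1 hc.2)
    rcases hmb with h' | h'
    · rw [h'] at hpC
      exact absurd hpC hF.hCm
    · exact h'
  refine ⟨p.1, b, ?_⟩
  have hθ : x p.1 b = tfun M x l := by rw [← hpb]; exact hpe
  have hml : mu M x l p.1 = insert b (Ints x p.1) := by
    rw [mu_firmII hx hF l, if_pos (le_of_eq hθ.symm)]
  have hml' : mu M x l' p.1 = insert m (Ints x p.1) := by
    rw [mu_firmII hx hF l', if_neg (not_le.2 (by rw [hθ]; exact htl))]
  rw [hml, hml', Finset.filter_insert, Finset.filter_insert]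
  have hbw : M.weakF p.1 b b := weakF_refl M p.1 b
  have hmw : ¬ M.weakF p.1 m b := not_weakF_of_pref M hF.horder
  rw [if_pos hbw, if_neg hmw]
  have hbni : b ∉ (Ints x p.1).filter (fun j => M.weakF p.1 j b) := by
    rw [mem_filter]
    rintro ⟨hi, -⟩
    unfold Ints at hi
    exact (ne_of_lt (mem_Phi.1 hF.hb).2) (mem_filter.1 hi).2
  rw [Finset.card_insert_of_notMem hbni]
  omega

end Dominance

end SSProof

/-- Every strongly stable fractional matching is a convex combination of
incidence vectors of stable matchings that are strictly decreasing in the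
common preferences of all firms. -/
theorem strongly_stable_is_ordered_convex_combination {F W : Type*} [Fintype F] [Fintype W]
    (M : Market F W) (x : F → W → ℝ) (hx : M.StronglyStable x) :
    ∃ (k : ℕ) (μ : Fin k → (F → Finset W)) (α : Fin k → ℝ),
      (∀ l, M.isStable (μ l)) ∧ (∀ l, 0 < α l) ∧ (∑ l, α l = 1) ∧
      (∀ f w, x f w = ∑ l, α l * M.incidence (μ l) f w) ∧
      (∀ l : Fin k, ∀ h : (l : ℕ) + 1 < k,
        M.firmsPrefer (M.incidence (μ l)) (M.incidence (μ ⟨(l : ℕ) + 1, h⟩))) := by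
  classical
  refine ⟨SSProof.nthr M x, fun l => SSProof.mu M x l, SSProof.alphafun M x,
    fun l => SSProof.mu_stable hx l, fun l => SSProof.alphafun_pos l,
    SSProof.sum_alphafun, fun f w => SSProof.mu_decomp hx f w, ?_⟩
  intro l h
  have hlt : l < (⟨(l : ℕ) + 1, h⟩ : Fin (SSProof.nthr M x)) := by
    rw [Fin.lt_def]
    simp only [Fin.val_mk]
    omega
  constructor
  · intro f w
    rw [SSProof.rowAbove_inc, SSProof.rowAbove_inc]
    exact_mod_cast SSProof.mu_dom hx (le_of_lt hlt) f w
  · obtain ⟨f, w, hst⟩ := SSProof.mu_strict hx hlt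
    refine ⟨f, w, ?_⟩
    rw [SSProof.rowAbove_inc, SSProof.rowAbove_inc]
    exact_mod_cast hst
end

section
/- Let x̄ = α·x^μ + (1−α)·y with 0 < α < 1, where μ is a matching and y is a fractional matching, and suppose both x^μ and y satisfy the capacity constraints (Σ_j x_{f,j} ≤ q_f and Σ_i x_{i,w} ≤ 1). If x̄ satisfies the strong stability condition at an acceptable pair (f,w), then both x^μ and y individually satisfy the strong stability condition at (f,w). -/
open Finset
open scoped Classical

/-- If `x̄ = α·x^μ + (1-α)·y` satisfies the strong stability condition at an
acceptable pair, then so do both `x^μ` and `y`. -/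
theorem strong_condition_of_convex_components {F W : Type*} [Fintype F] [Fintype W]
    (M : Market F W) (μ : F → Finset W) (hμ : M.isMatching μ)
    (y : F → W → ℝ) (hy0 : ∀ f w, 0 ≤ y f w)
    (hyq : ∀ f, ∑ j, y f j ≤ (M.q f : ℝ)) (hy1 : ∀ w, ∑ i, y i w ≤ 1)
    (α : ℝ) (hα0 : 0 < α) (hα1 : α < 1)
    (x : F → W → ℝ)
    (hxdef : x = fun f w => α * M.incidence μ f w + (1 - α) * y f w)
    (f : F) (w : W) (hacc : M.acceptable f w)
    (hss : M.StrongCondAt x f w) :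
    M.StrongCondAt (M.incidence μ) f w ∧ M.StrongCondAt y f w := by

  -- abbreviations
  have h1α : 0 < 1 - α := by linarith
  -- linearity of the sums
  have hrow : ∀ w', M.rowSumAbove (fun f w => α * M.incidence μ f w + (1 - α) * y f w) f w'
      = α * M.rowSumAbove (M.incidence μ) f w' + (1 - α) * M.rowSumAbove y f w' := by
    intro w'
    simp only [Market.rowSumAbove, Finset.sum_add_distrib, Finset.mul_sum]
  have hcol : M.colSumAbove (fun f w => α * M.incidence μ f w + (1 - α) * y f w) w f
      = α * M.colSumAbove (M.incidence μ) w f + (1 - α) * M.colSumAbove y w f := by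
    simp only [Market.colSumAbove, Finset.sum_add_distrib, Finset.mul_sum]
  -- incidence bounds
  have hinc0 : ∀ f' w', (0:ℝ) ≤ M.incidence μ f' w' := by
    intro f' w'; unfold Market.incidence; split <;> norm_num
  have hincrow : ∀ f', ∑ j, M.incidence μ f' j ≤ (M.q f' : ℝ) := by
    intro f'
    have : ∑ j, M.incidence μ f' j = ((μ f').card : ℝ) := by
      unfold Market.incidence
      rw [Finset.sum_boole]
      congr 1
      rw [Finset.filter_mem_eq_inter, Finset.univ_inter]
    rw [this]
    exact_mod_cast hμ.1 f'
  have hinccol : ∀ w', ∑ i, M.incidence μ i w' ≤ 1 := by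
    intro w'
    have : ∑ i, M.incidence μ i w' = ((Finset.univ.filter (fun i => w' ∈ μ i)).card : ℝ) := by
      unfold Market.incidence
      rw [Finset.sum_boole]
    rw [this]
    have hc : (Finset.univ.filter (fun i => w' ∈ μ i)).card ≤ 1 := by
      apply Finset.card_le_one.2
      intro a ha b hb
      simp only [Finset.mem_filter] at ha hb
      exact hμ.2 w' a b ha.2 hb.2
    exact_mod_cast hc
  -- bounds of partial sums
  have hrow_le : ∀ (z : F → W → ℝ), (∀ f' w', 0 ≤ z f' w') → (∀ f', ∑ j, z f' j ≤ (M.q f' : ℝ)) →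
      M.rowSumAbove z f w ≤ (M.q f : ℝ) := by
    intro z hz0 hzq
    refine le_trans ?_ (hzq f)
    exact Finset.sum_le_sum_of_subset_of_nonneg (Finset.filter_subset _ _)
      (fun j _ _ => hz0 f j)
  have hcol_le : ∀ (z : F → W → ℝ), (∀ f' w', 0 ≤ z f' w') → (∀ w', ∑ i, z i w' ≤ 1) →
      M.colSumAbove z w f ≤ 1 := by
    intro z hz0 hz1
    refine le_trans ?_ (hz1 w)
    exact Finset.sum_le_sum_of_subset_of_nonneg (Finset.filter_subset _ _)
      (fun i _ _ => hz0 i w)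
  set A1 := M.rowSumAbove (M.incidence μ) f w with hA1
  set A2 := M.rowSumAbove y f w with hA2
  set B1 := M.colSumAbove (M.incidence μ) w f with hB1
  set B2 := M.colSumAbove y w f with hB2
  have hA1le : A1 ≤ (M.q f : ℝ) := hrow_le _ hinc0 hincrow
  have hA2le : A2 ≤ (M.q f : ℝ) := hrow_le _ hy0 hyq
  have hB1le : B1 ≤ 1 := hcol_le _ hinc0 hinccol
  have hB2le : B2 ≤ 1 := hcol_le _ hy0 hy1
  unfold Market.StrongCondAt at hss ⊢
  rw [hxdef, hrow, hcol] at hss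
  rcases mul_eq_zero.1 hss with h | h
  · have h1 : (M.q f : ℝ) - A1 = 0 ∧ (M.q f : ℝ) - A2 = 0 := by
      constructor <;> nlinarith
    constructor
    · rw [← hA1, h1.1, zero_mul]
    · rw [← hA2, h1.2, zero_mul]
  · have h1 : 1 - B1 = 0 ∧ 1 - B2 = 0 := by
      constructor <;> nlinarith
    constructor
    · rw [← hB1, h1.1, mul_zero]
    · rw [← hB2, h1.2, mul_zero]
end

section
/- Let μ be a stable matching, P^μ the reduced preference profile at μ, and σ, σ' two distinct cycles of P^μ. Then σ is also a cycle of the reduced profile P^{μ[σ']}, and the cyclic matchings obtained by applying the two cycles in either order coincide: μ[σ][σ'] = μ[σ'][σ]. -/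
open Finset
open scoped Classical

namespace Market

variable {F W : Type*} [Fintype F] [Fintype W] (M : Market F W)

/-- A pair `(f,w)` survives the three-step reduction procedure at the stable
matching `μ` (with `μW` the worker-optimal stable matching). -/
def redAcc (μ μW : F → Finset W) (f : F) (w : W) : Prop :=
  M.acceptable f w ∧
  (∃ w' ∈ μ f, M.weakF f w' w) ∧ (∃ w'' ∈ μW f, M.weakF f w w'') ∧
  (∀ i, w ∈ μW i → M.weakW w i f) ∧ (∀ i, w ∈ μ i → M.weakW w f i)

def nxt {r : ℕ} (d : Fin r) : Fin r := ⟨(d.val + 1) % r, Nat.mod_lt _ d.pos⟩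

def prv {r : ℕ} (d : Fin r) : Fin r := ⟨(d.val + r - 1) % r, Nat.mod_lt _ d.pos⟩

/-- A cycle of the reduced preference profile at `μ`: firms `e 0, …, e (r-1)`
with designated workers `wc d`, where `wc d ∈ μ (e (d+1))`, `wc d ∉ μ (e d)`,
and `wc d` is `e d`'s most preferred worker outside `μ (e d)` in the reduced list. -/
def IsCycle (μ μW : F → Finset W) {r : ℕ} (e : Fin r → F) (wc : Fin r → W) : Prop :=
  0 < r ∧ Function.Injective e ∧
  ∀ d : Fin r,
    wc d ∈ μ (e (nxt d)) ∧ wc d ∉ μ (e d) ∧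
    M.redAcc μ μW (e d) (wc d) ∧
    (∀ w', M.redAcc μ μW (e d) w' → w' ∉ μ (e d) → M.weakF (e d) (wc d) w')

/-- `μ'` is the cyclic matching `μ[σ]` obtained from `μ` by the cycle `(e, wc)`. -/
def IsCyclicMatch (_m : Market F W) (μ : F → Finset W) {r : ℕ} (e : Fin r → F) (wc : Fin r → W)
    (μ' : F → Finset W) : Prop :=
  (∀ d, μ' (e d) = insert (wc d) ((μ (e d)).erase (wc (prv d)))) ∧
  (∀ f, (∀ d, e d ≠ f) → μ' f = μ f)

end Market

section AuxCycles

variable {F W : Type*} [Fintype F] [Fintype W] (M : Market F W)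

lemma weakF_antisymm {f : F} {a b : W} (h1 : M.weakF f a b) (h2 : M.weakF f b a) : a = b := by
  rcases h1 with h1 | h1
  · rcases h2 with h2 | h2
    · exact absurd (M.prefF_trans f h2 h1) (M.prefF_irrefl f b)
    · exact h2.symm
  · exact h1

lemma weakW_trans' {w : W} {a b c : F} (h1 : M.weakW w a b) (h2 : M.weakW w b c) :
    M.weakW w a c := by
  rcases h1 with h1 | rfl
  · rcases h2 with h2 | rfl
    · exact Or.inl (M.prefW_trans w h1 h2)
    · exact Or.inl h1
  · exact h2

lemma nxt_iterate_val {r : ℕ} (k : ℕ) (d : Fin r) :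
    ((Market.nxt)^[k] d).val = (d.val + k) % r := by
  induction k with
  | zero => simp [Nat.mod_eq_of_lt d.isLt]
  | succ k ih =>
    rw [Function.iterate_succ_apply']
    show (((Market.nxt)^[k] d).val + 1) % r = _
    rw [ih, Nat.mod_add_mod, Nat.add_assoc]

/-- Distinct cycles are disjoint: they share no firm. -/
lemma cycles_firm_disjoint {μ μW : F → Finset W}
    (hmatch : ∀ w f f', w ∈ μ f → w ∈ μ f' → f = f')
    {r r' : ℕ} {e : Fin r → F} {wc : Fin r → W} {e' : Fin r' → F} {wc' : Fin r' → W}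
    (hc : M.IsCycle μ μW e wc) (hc' : M.IsCycle μ μW e' wc')
    (hdist : Set.range e ≠ Set.range e') :
    ∀ d d', e d ≠ e' d' := by
  by_contra h
  push_neg at h
  obtain ⟨d, d', hdd⟩ := h
  have key : ∀ k : ℕ, e ((Market.nxt)^[k] d) = e' ((Market.nxt)^[k] d') := by
    intro k
    induction k with
    | zero => exact hdd
    | succ k ih =>
      set a := (Market.nxt)^[k] d with ha
      set a' := (Market.nxt)^[k] d' with ha'
      obtain ⟨hm1, hn1, hr1, hx1⟩ := hc.2.2 a
      obtain ⟨hm2, hn2, hr2, hx2⟩ := hc'.2.2 a'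
      have hw : wc a = wc' a' := by
        have hA : M.weakF (e a) (wc a) (wc' a') := by
          refine hx1 _ ?_ ?_
          · rw [ih]; exact hr2
          · rw [ih]; exact hn2
        have hB : M.weakF (e' a') (wc' a') (wc a) := by
          refine hx2 _ ?_ ?_
          · rw [← ih]; exact hr1
          · rw [← ih]; exact hn1
        exact weakF_antisymm M hA (ih ▸ hB)
      have : e (Market.nxt a) = e' (Market.nxt a') := hmatch _ _ _ hm1 (hw ▸ hm2)
      rw [Function.iterate_succ_apply', Function.iterate_succ_apply']
      exact this
  apply hdist
  have hrr : 0 < r := hc.1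
  have hrr' : 0 < r' := hc'.1
  ext f
  constructor
  · rintro ⟨b, rfl⟩
    refine ⟨(Market.nxt)^[b.val + r - d.val] d', ?_⟩
    rw [← key]
    congr 1
    apply Fin.ext
    rw [nxt_iterate_val]
    have hd : d.val < r := d.isLt
    have hb : b.val < r := b.isLt
    have : d.val + (b.val + r - d.val) = b.val + r := by omega
    rw [this, Nat.add_mod_right, Nat.mod_eq_of_lt hb]
  · rintro ⟨b, rfl⟩
    refine ⟨(Market.nxt)^[b.val + r' - d'.val] d, ?_⟩
    rw [key]
    congr 1
    apply Fin.ext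
    rw [nxt_iterate_val]
    have hd : d'.val < r' := d'.isLt
    have hb : b.val < r' := b.isLt
    have : d'.val + (b.val + r' - d'.val) = b.val + r' := by omega
    rw [this, Nat.add_mod_right, Nat.mod_eq_of_lt hb]

/-- Distinct cycles share no designated worker either. -/
lemma cycles_worker_disjoint {μ μW : F → Finset W}
    (hmatch : ∀ w f f', w ∈ μ f → w ∈ μ f' → f = f')
    {r r' : ℕ} {e : Fin r → F} {wc : Fin r → W} {e' : Fin r' → F} {wc' : Fin r' → W}
    (hc : M.IsCycle μ μW e wc) (hc' : M.IsCycle μ μW e' wc')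
    (hdist : Set.range e ≠ Set.range e') :
    ∀ d d', wc d ≠ wc' d' := by
  intro d d' hw
  obtain ⟨hm1, _, _, _⟩ := hc.2.2 d
  obtain ⟨hm2, _, _, _⟩ := hc'.2.2 d'
  exact cycles_firm_disjoint M hmatch hc hc' hdist (Market.nxt d) (Market.nxt d')
    (hmatch _ _ _ hm1 (hw ▸ hm2))

end AuxCycles

/-- Applying two distinct cycles of the reduced profile at `μ` commutes, and
each remains a cycle after the other one is applied. -/
theorem cycles_commute {F W : Type*} [Fintype F] [Fintype W]
    (M : Market F W) (μ μW : F → Finset W)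
    (hμ : M.isStable μ) (hμW : M.isStable μW)
    (hWopt : ∀ μ', M.isStable μ' → ∀ w f,
      M.colSumAbove (M.incidence μ') w f ≤ M.colSumAbove (M.incidence μW) w f)
    {r r' : ℕ} (e : Fin r → F) (wc : Fin r → W) (e' : Fin r' → F) (wc' : Fin r' → W)
    (hc : M.IsCycle μ μW e wc) (hc' : M.IsCycle μ μW e' wc')
    (hdist : Set.range e ≠ Set.range e')
    (μ1 : F → Finset W) (h1 : M.IsCyclicMatch μ e' wc' μ1) :
    M.IsCycle μ1 μW e wc ∧
    ∀ μ2 μ3 μ4 : F → Finset W,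
      M.IsCyclicMatch μ e wc μ2 →
      M.IsCyclicMatch μ2 e' wc' μ3 →
      M.IsCyclicMatch μ1 e wc μ4 →
      μ3 = μ4 := by
  have hmatch : ∀ w f f', w ∈ μ f → w ∈ μ f' → f = f' := hμ.1.2
  have fdisj : ∀ d d', e d ≠ e' d' := cycles_firm_disjoint M hmatch hc hc' hdist
  have wdisj : ∀ d d', wc d ≠ wc' d' := cycles_worker_disjoint M hmatch hc hc' hdist
  -- μ1 agrees with μ on every firm of the first cycle
  have hfix : ∀ f, (∀ d', e' d' ≠ f) → μ1 f = μ f := h1.2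
  have hfixe : ∀ d, μ1 (e d) = μ (e d) := fun d =>
    hfix _ (fun d' h => fdisj d d' h.symm)
  -- membership transfer: if w ∈ μ i but w ∉ μ1 i then w is some wc' d₁, moved to e' d₁
  have hmove : ∀ (w : W) (i : F), w ∈ μ i → w ∉ μ1 i →
      ∃ d₁, w = wc' d₁ ∧ w ∈ μ1 (e' d₁) ∧ w ∈ μ i := by
    intro w i hwi hw1
    by_cases hi : ∀ d', e' d' ≠ i
    · rw [hfix i hi] at hw1; exact absurd hwi hw1
    · push_neg at hi
      obtain ⟨d₀, rfl⟩ := hi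
      rw [h1.1 d₀, Finset.mem_insert] at hw1
      push_neg at hw1
      have : w = wc' (Market.prv d₀) := by
        by_contra hne
        exact hw1.2 (Finset.mem_erase.mpr ⟨hne, hwi⟩)
      refine ⟨Market.prv d₀, this, ?_, hwi⟩
      rw [h1.1 (Market.prv d₀), this]
      exact Finset.mem_insert_self _ _
  -- a worker of cycle σ' weakly prefers its new firm to its old one
  have hstep : ∀ (w : W) (i : F) (d₁ : Fin r'), w = wc' d₁ → w ∈ μ i →
      M.weakW w (e' d₁) i := by
    intro w i d₁ hw hwi
    subst hw
    obtain ⟨_, _, hr2, _⟩ := hc'.2.2 d₁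
    exact hr2.2.2.2.2 i hwi
  constructor
  · -- σ is still a cycle of the reduced profile at μ1
    refine ⟨hc.1, hc.2.1, fun d => ?_⟩
    obtain ⟨hm, hnm, hra, hmax⟩ := hc.2.2 d
    refine ⟨by rw [hfixe (Market.nxt d)]; exact hm, by rw [hfixe d]; exact hnm, ?_, ?_⟩
    · -- redAcc at μ1 for (e d, wc d)
      obtain ⟨hacc, hex, hexW, hW1, hW2⟩ := hra
      refine ⟨hacc, by rw [hfixe d]; exact hex, hexW, hW1, ?_⟩
      intro i hwi
      by_cases hμi : wc d ∈ μ i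
      · exact hW2 i hμi
      · -- wc d entered μ1 i via the cycle σ', so wc d = wc' d₀ : contradiction
        exfalso
        by_cases hi : ∀ d', e' d' ≠ i
        · rw [hfix i hi] at hwi; exact hμi hwi
        · push_neg at hi
          obtain ⟨d₀, rfl⟩ := hi
          rw [h1.1 d₀, Finset.mem_insert] at hwi
          rcases hwi with hwi | hwi
          · exact wdisj d d₀ hwi
          · exact hμi (Finset.mem_of_mem_erase hwi)
    · -- maximality at μ1
      intro w' hra' hnm'
      apply hmax
      · -- redAcc at μ1 implies redAcc at μ for (e d, w')
        obtain ⟨hacc, hex, hexW, hW1, hW2⟩ := hra'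
        refine ⟨hacc, by rw [← hfixe d]; exact hex, hexW, hW1, ?_⟩
        intro i hwi
        by_cases hw1 : w' ∈ μ1 i
        · exact hW2 i hw1
        · obtain ⟨d₁, hwd, hw1', _⟩ := hmove w' i hwi hw1
          exact weakW_trans' M (hW2 _ hw1') (hstep w' i d₁ hwd hwi)
      · rw [← hfixe d]; exact hnm'
  · -- commutation
    intro μ2 μ3 μ4 h2 h3 h4
    funext f
    by_cases hf : ∃ d, e d = f
    · obtain ⟨d, rfl⟩ := hf
      have hne' : ∀ d', e' d' ≠ e d := fun d' h => fdisj d d' h.symm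
      rw [h3.2 _ hne', h2.1 d, h4.1 d, hfixe d]
    · push_neg at hf
      by_cases hf' : ∃ d', e' d' = f
      · obtain ⟨d', rfl⟩ := hf'
        rw [h3.1 d', h2.2 _ hf, h4.2 _ hf, h1.1 d']
      · push_neg at hf'
        rw [h3.2 _ hf', h2.2 _ hf, h4.2 _ hf, hfix _ hf']
end

section
/- Let μ be a stable matching of a many-to-one matching market and σ a cycle of the reduced preference profile P^μ. Then the cyclic matching μ[σ] is a stable matching of the original market, and μ ≻_F μ[σ]. -/
open Finset
open scoped Classical

theorem aux_card_swap {W : Type*} (P : W → Prop) [DecidableEq W] [DecidablePred P]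
    (s : Finset W) (a b : W) (ha : a ∉ s) (hb : b ∈ s) (hPab : P a → P b) :
    ((insert a (s.erase b)).filter P).card ≤ (s.filter P).card ∧
    (P b → ¬ P a → ((insert a (s.erase b)).filter P).card < (s.filter P).card) := by
  rw [Finset.filter_insert, Finset.filter_erase]
  by_cases hPa : P a
  · rw [if_pos hPa, Finset.card_insert_of_notMem (fun h => ha (Finset.mem_filter.1 (Finset.mem_of_mem_erase h)).1),
      Finset.card_erase_of_mem (Finset.mem_filter.2 ⟨hb, hPab hPa⟩)]
    have h1 : 1 ≤ ((s.filter P).card) := Finset.card_pos.2 ⟨b, Finset.mem_filter.2 ⟨hb, hPab hPa⟩⟩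
    constructor
    · omega
    · exact fun _ h => absurd hPa h
  · rw [if_neg hPa]
    refine ⟨Finset.card_le_card (Finset.erase_subset _ _), fun hPb _ => ?_⟩
    rw [Finset.card_erase_of_mem (Finset.mem_filter.2 ⟨hb, hPb⟩)]
    have h1 : 1 ≤ ((s.filter P).card) := Finset.card_pos.2 ⟨b, Finset.mem_filter.2 ⟨hb, hPb⟩⟩
    omega

theorem aux_rowSum {F W : Type*} [Fintype F] [Fintype W] (M : Market F W)
    (ν : F → Finset W) (f : F) (w : W) :
    M.rowSumAbove (M.incidence ν) f w
      = (((ν f).filter (fun j => M.weakF f j w)).card : ℝ) := by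
  unfold Market.rowSumAbove Market.incidence
  rw [Finset.sum_boole]
  congr 2
  ext j; simp [and_comm]

/-- The cyclic matching `μ[σ]` of a stable matching `μ` along a cycle `σ` of
the reduced profile at `μ` is stable, and all firms weakly prefer `μ`, at
least one strictly. -/
theorem cyclic_matching_stable {F W : Type*} [Fintype F] [Fintype W]
    (M : Market F W) (μ μW : F → Finset W)
    (hμ : M.isStable μ) (hμW : M.isStable μW)
    (hWopt : ∀ μ'', M.isStable μ'' → ∀ w f,
      M.colSumAbove (M.incidence μ'') w f ≤ M.colSumAbove (M.incidence μW) w f)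
    {r : ℕ} (e : Fin r → F) (wc : Fin r → W)
    (hc : M.IsCycle μ μW e wc)
    (μ' : F → Finset W) (h' : M.IsCyclicMatch μ e wc μ') :
    M.isStable μ' ∧ M.firmsPrefer (M.incidence μ) (M.incidence μ') := by
  classical
  obtain ⟨hr, he, hcyc⟩ := hc
  obtain ⟨h'e, h'o⟩ := h'
  obtain ⟨⟨hcapμ, huniqμ⟩, hirμ, hnbμ⟩ := hμ
  obtain ⟨⟨hcapW, huniqW⟩, hirW, hnbW⟩ := hμW
  have asymF : ∀ f (a b : W), M.prefF f a b → ¬ M.prefF f b a :=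
    fun f a b h1 h2 => M.prefF_irrefl f a (M.prefF_trans f h1 h2)
  have asymW : ∀ w (a b : F), M.prefW w a b → ¬ M.prefW w b a :=
    fun w a b h1 h2 => M.prefW_irrefl w a (M.prefW_trans w h1 h2)
  have hmem : ∀ d : Fin r, wc d ∈ μ (e (Market.nxt d)) := fun d => (hcyc d).1
  have hnot : ∀ d : Fin r, wc d ∉ μ (e d) := fun d => (hcyc d).2.1
  have hred : ∀ d : Fin r, M.redAcc μ μW (e d) (wc d) := fun d => (hcyc d).2.2.1
  have hmin : ∀ (d : Fin r) w', M.redAcc μ μW (e d) w' → w' ∉ μ (e d) →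
      M.weakF (e d) (wc d) w' := fun d => (hcyc d).2.2.2
  -- cycle index arithmetic
  have hnd : ∀ d : Fin r, Market.nxt d ≠ d := by
    intro d hdd
    have h1 := hmem d
    rw [hdd] at h1
    exact hnot d h1
  have hnp : ∀ d : Fin r, Market.nxt (Market.prv d) = d := by
    intro d
    apply Fin.ext
    show ((d.val + r - 1) % r + 1) % r = d.val
    rcases Nat.eq_zero_or_pos d.val with h0 | h0
    · have hm1 : (r - 1) % r = r - 1 := Nat.mod_eq_of_lt (by omega)
      rw [h0, show 0 + r - 1 = r - 1 from by omega, hm1,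
        Nat.sub_add_cancel hr, Nat.mod_self]
    · have hd : d.val < r := d.isLt
      have hm1 : (d.val - 1) % r = d.val - 1 := Nat.mod_eq_of_lt (by omega)
      rw [show d.val + r - 1 = (d.val - 1) + r from by omega, Nat.add_mod_right,
        hm1, show d.val - 1 + 1 = d.val from by omega,
        Nat.mod_eq_of_lt hd]
  have hsurj : Function.Surjective (Market.nxt : Fin r → Fin r) :=
    fun d => ⟨Market.prv d, hnp d⟩
  have hinjn : Function.Injective (Market.nxt : Fin r → Fin r) :=
    Finite.injective_iff_surjective.2 hsurj
  have hpn : ∀ d : Fin r, Market.prv (Market.nxt d) = d :=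
    fun d => hinjn (hnp (Market.nxt d))
  have hpd : ∀ d : Fin r, Market.prv d ≠ d := by
    intro d h
    exact hnd d ((congrArg Market.nxt h.symm).trans (hnp d))
  have hprvmem : ∀ d : Fin r, wc (Market.prv d) ∈ μ (e d) := by
    intro d
    have h1 := hmem (Market.prv d)
    rwa [hnp d] at h1
  have hwcinj : Function.Injective wc := by
    intro a b hab
    have h2 : wc a ∈ μ (e (Market.nxt b)) := by rw [hab]; exact hmem b
    have h1 := huniqμ (wc a) (e (Market.nxt a)) (e (Market.nxt b)) (hmem a) h2
    exact hinjn (he h1)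
  -- worker in the cycle strictly prefers new firm
  have hB : ∀ d : Fin r, M.prefW (wc d) (e d) (e (Market.nxt d)) := by
    intro d
    rcases (hred d).2.2.2.2 (e (Market.nxt d)) (hmem d) with h | h
    · exact h
    · exact absurd (he h).symm (hnd d)
  -- firm e d is full and prefers all its μ-partners to wc d
  have hfull : ∀ d : Fin r, (μ (e d)).card = M.q (e d) ∧
      ∀ w' ∈ μ (e d), M.prefF (e d) w' (wc d) := by
    intro d
    have hw : ∀ f', wc d ∈ μ f' → M.prefW (wc d) (e d) f' := by
      intro f' hf'
      have h1 : f' = e (Market.nxt d) := huniqμ _ _ _ hf' (hmem d)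
      rw [h1]; exact hB d
    have hno : ¬ ((μ (e d)).card < M.q (e d) ∨
        ∃ w' ∈ μ (e d), M.prefF (e d) (wc d) w') := by
      intro hcon
      exact hnbμ (e d) (wc d) ⟨hnot d, (hred d).1, hw, hcon⟩
    push_neg at hno
    obtain ⟨h1, h2⟩ := hno
    refine ⟨le_antisymm (hcapμ _) h1, ?_⟩
    intro w' hw'
    have hne : wc d ≠ w' := fun h => hnot d (h ▸ hw')
    rcases M.prefF_total (e d) (wc d) w' hne with h | h
    · exact absurd h (h2 w' hw')
    · exact h
  -- membership characterization of μ'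
  have hmem' : ∀ f w, w ∈ μ' f ↔
      (∃ d, f = e d ∧ w = wc d) ∨ (w ∈ μ f ∧ ∀ d, w ≠ wc d) := by
    intro f w
    by_cases hf : ∃ d, e d = f
    · obtain ⟨d, rfl⟩ := hf
      rw [h'e d]
      constructor
      · intro hw
        rcases Finset.mem_insert.1 hw with h | h
        · exact Or.inl ⟨d, rfl, h⟩
        · obtain ⟨hne, hmem2⟩ := Finset.mem_erase.1 h
          refine Or.inr ⟨hmem2, fun d' heq => ?_⟩
          have h1 : e d = e (Market.nxt d') := huniqμ w _ _ hmem2 (heq ▸ hmem d')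
          have h2 : d' = Market.prv d := by
            rw [← hpn d', ← he h1]
          exact hne (by rw [heq, h2])
      · rintro (⟨d', hfd, rfl⟩ | ⟨hmemw, hall⟩)
        · have : d' = d := he hfd.symm
          rw [this]; exact Finset.mem_insert_self _ _
        · exact Finset.mem_insert_of_mem (Finset.mem_erase.2 ⟨hall _, hmemw⟩)
    · push_neg at hf
      rw [h'o f (fun d => hf d)]
      constructor
      · intro hw
        refine Or.inr ⟨hw, fun d heq => ?_⟩
        have hwm : w ∈ μ (e (Market.nxt d)) := by rw [heq]; exact hmem d
        exact hf (Market.nxt d) (huniqμ w _ _ hwm hw)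
      · rintro (⟨d, rfl, _⟩ | ⟨hw, _⟩)
        · exact absurd rfl (hf d)
        · exact hw
  -- μ' is a matching
  have hcard' : ∀ d : Fin r, (μ' (e d)).card = (μ (e d)).card := by
    intro d
    rw [h'e d, Finset.card_insert_of_notMem
      (fun h => hnot d (Finset.mem_of_mem_erase h)),
      Finset.card_erase_of_mem (hprvmem d)]
    have h1 : 1 ≤ (μ (e d)).card := Finset.card_pos.2 ⟨_, hprvmem d⟩
    omega
  have hcap' : ∀ f, (μ' f).card ≤ M.q f := by
    intro f
    by_cases hf : ∃ d, e d = f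
    · obtain ⟨d, rfl⟩ := hf
      rw [hcard' d, (hfull d).1]
    · push_neg at hf
      rw [h'o f hf]; exact hcapμ f
  have huniq' : ∀ (w : W) f f', w ∈ μ' f → w ∈ μ' f' → f = f' := by
    intro w f f' h1 h2
    rcases (hmem' f w).1 h1 with ⟨d, rfl, rfl⟩ | ⟨hw, hnwc⟩
    · rcases (hmem' f' _).1 h2 with ⟨d', hf', hwc'⟩ | ⟨_, hnwc'⟩
      · rw [hf', hwcinj hwc']
      · exact absurd rfl (hnwc' d)
    · rcases (hmem' f' w).1 h2 with ⟨d', rfl, rfl⟩ | ⟨hw', _⟩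
      · exact absurd rfl (hnwc d')
      · exact huniqμ w f f' hw hw'
  -- μ' is individually rational
  have hir' : M.indivRational μ' := by
    intro f w hw
    rcases (hmem' f w).1 hw with ⟨d, rfl, rfl⟩ | ⟨hw2, _⟩
    · exact (hred d).1
    · exact hirμ f w hw2
  -- worker preference transfer from μ' to μ
  have hL1 : ∀ (w : W) (f : F), (∀ f'', w ∈ μ' f'' → M.prefW w f f'') →
      ∀ f'', w ∈ μ f'' → M.prefW w f f'' := by
    intro w f hblk f'' hw
    by_cases hwc : ∃ d, w = wc d
    · obtain ⟨d, rfl⟩ := hwc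
      have hf'' : f'' = e (Market.nxt d) := huniqμ _ _ _ hw (hmem d)
      rw [hf'']
      have h1 : M.prefW (wc d) f (e d) :=
        hblk (e d) ((hmem' (e d) (wc d)).2 (Or.inl ⟨d, rfl, rfl⟩))
      exact M.prefW_trans _ h1 (hB d)
    · push_neg at hwc
      exact hblk f'' ((hmem' f'' w).2 (Or.inr ⟨hw, hwc⟩))
  -- no blocking pairs for μ'
  have hnb' : ∀ f w, ¬ M.blocks μ' f w := by
    intro f w hb
    obtain ⟨hnm', hacc, hwpref, hfcond⟩ := hb
    by_cases hf : ∃ d, e d = f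
    · obtain ⟨d, rfl⟩ := hf
      have hwnotμ : w ∉ μ (e d) := by
        intro hwin
        have hwprv : w = wc (Market.prv d) := by
          by_contra hne2
          exact hnm' (by rw [h'e d]; exact Finset.mem_insert_of_mem (Finset.mem_erase.2 ⟨hne2, hwin⟩))
        have h1 : M.prefW w (e d) (e (Market.prv d)) := by
          refine hwpref (e (Market.prv d)) ?_
          exact (hmem' _ _).2 (Or.inl ⟨Market.prv d, rfl, hwprv⟩)
        have h2 : M.prefW w (e (Market.prv d)) (e d) := by
          have := hB (Market.prv d)
          rw [hnp d] at this
          rw [hwprv]; exact this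
        exact asymW _ _ _ h1 h2
      have hq' : ¬ (μ' (e d)).card < M.q (e d) := by
        rw [hcard' d, (hfull d).1]; exact lt_irrefl _
      obtain ⟨w', hw', hpf⟩ := hfcond.resolve_left hq'
      rw [h'e d] at hw'
      rcases Finset.mem_insert.1 hw' with hweq | hwer
      · -- w' = wc d : use minimality of wc d
        rw [hweq] at hpf
        have hc2 : ∃ w'' ∈ μ (e d), M.weakF (e d) w'' w := by
          by_contra hcon
          push_neg at hcon
          have hh := hcon _ (hprvmem d)
          have hne : w ≠ wc (Market.prv d) := fun h => hh (Or.inr h.symm)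
          have hpw : M.prefF (e d) w (wc (Market.prv d)) := by
            rcases M.prefF_total (e d) w (wc (Market.prv d)) hne with h | h
            · exact h
            · exact absurd (Or.inl h) hh
          exact hnbμ (e d) w ⟨hwnotμ, hacc, hL1 w (e d) hwpref,
            Or.inr ⟨_, hprvmem d, hpw⟩⟩
        have hc3 : ∃ w'' ∈ μW (e d), M.weakF (e d) w w'' := by
          obtain ⟨w'', hw'', hwk⟩ := (hred d).2.2.1
          refine ⟨w'', hw'', Or.inl ?_⟩
          rcases hwk with h | h
          · exact M.prefF_trans _ hpf h
          · exact h ▸ hpf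
        have hc4 : ∀ i, w ∈ μW i → M.weakW w i (e d) := by
          intro i hwi
          by_contra hcon
          have hie : i ≠ e d := fun h => hcon (Or.inr h)
          have hpwi : M.prefW w (e d) i :=
            (M.prefW_total w i (e d) hie).resolve_left (fun h => hcon (Or.inl h))
          have hwnW : w ∉ μW (e d) := fun hin => hie (huniqW w i (e d) hwi hin)
          obtain ⟨w'', hw'', hwk⟩ := hc3
          have hfirm : ∃ w''' ∈ μW (e d), M.prefF (e d) w w''' := by
            refine ⟨w'', hw'', ?_⟩
            rcases hwk with h | h
            · exact h
            · exact absurd (h ▸ hw'') hwnW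
          refine hnbW (e d) w ⟨hwnW, hacc, ?_, Or.inr hfirm⟩
          intro f'' hf''
          rw [huniqW w f'' i hf'' hwi]
          exact hpwi
        have hc5 : ∀ i, w ∈ μ i → M.weakW w (e d) i :=
          fun i hi => Or.inl (hL1 w (e d) hwpref i hi)
        have hredw : M.redAcc μ μW (e d) w := ⟨hacc, hc2, hc3, hc4, hc5⟩
        rcases hmin d w hredw hwnotμ with h | h
        · exact asymF _ _ _ hpf h
        · exact M.prefF_irrefl (e d) w (h ▸ hpf)
      · -- w' ∈ μ (e d) : (e d, w) blocks μ
        exact hnbμ (e d) w ⟨hwnotμ, hacc, hL1 w (e d) hwpref,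
          Or.inr ⟨w', Finset.mem_of_mem_erase hwer, hpf⟩⟩
    · push_neg at hf
      have hμ'f : μ' f = μ f := h'o f hf
      refine hnbμ f w ⟨hμ'f ▸ hnm', hacc, hL1 w f hwpref, hμ'f ▸ hfcond⟩
  -- firms prefer μ to μ'
  have hImp : ∀ (d : Fin r) (w : W), M.weakF (e d) (wc d) w →
      M.weakF (e d) (wc (Market.prv d)) w := by
    intro d w h
    have hA : M.prefF (e d) (wc (Market.prv d)) (wc d) := (hfull d).2 _ (hprvmem d)
    rcases h with h | h
    · exact Or.inl (M.prefF_trans _ hA h)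
    · exact Or.inl (h ▸ hA)
  have hrowle : ∀ f, M.firmWeakDom (M.incidence μ) (M.incidence μ') f := by
    intro f w
    by_cases hf : ∃ d, e d = f
    · obtain ⟨d, rfl⟩ := hf
      rw [aux_rowSum, aux_rowSum, Nat.cast_le, h'e d]
      exact (aux_card_swap _ _ _ _ (hnot d) (hprvmem d) (hImp d w)).1
    · push_neg at hf
      rw [aux_rowSum, aux_rowSum, h'o f hf]
  refine ⟨⟨⟨hcap', huniq'⟩, hir', hnb'⟩, hrowle, ?_⟩
  -- strict preference for firm e d0
  have d0 : Fin r := ⟨0, hr⟩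
  refine ⟨e d0, wc (Market.prv d0), ?_⟩
  rw [aux_rowSum, aux_rowSum, Nat.cast_lt, h'e d0]
  have hA : M.prefF (e d0) (wc (Market.prv d0)) (wc d0) := (hfull d0).2 _ (hprvmem d0)
  refine (aux_card_swap _ _ _ _ (hnot d0) (hprvmem d0) (hImp d0 _)).2 (Or.inr rfl) ?_
  rintro (h | h)
  · exact asymF _ _ _ hA h
  · exact M.prefF_irrefl _ _ (h ▸ hA)
end
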